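/- arXiv:1903.11825 — 5 statements merged into one kernel-verified Lean document; each statement's English description precedes it below -/
import Mathlib

section
/- For every integer n ≥ 0 and every real r > 0, the modified Bessel function of the first kind satisfies r · I_n'(r) / I_n(r) > sqrt((n+1)^2 + r^2) − 1. -/
open Real

/-- Modified Bessel function of the first kind of order `n`. -/
noncomputable def besselI (n : ℕ) (x : ℝ) : ℝ :=
  ∑' k : ℕ, (x / 2) ^ (2 * k + n) / ((Nat.factorial k : ℝ) * (Nat.factorial (k + n) : ℝ))

/-- Modified Bessel function of the second kind of order `ν`. -/
noncomputable def besselK (ν : ℝ) (x : ℝ) : ℝ :=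
  ∫ t in Set.Ioi (0 : ℝ), Real.exp (-x * Real.cosh t) * Real.cosh (ν * t)

noncomputable def D (x y : ℝ) : ℝ := besselI 0 x * besselK 0 y - besselK 0 x * besselI 0 y

noncomputable def D10 (x y : ℝ) : ℝ :=
  deriv (besselI 0) x * besselK 0 y - deriv (besselK 0) x * besselI 0 y

noncomputable def D01 (x y : ℝ) : ℝ :=
  besselI 0 x * deriv (besselK 0) y - besselK 0 x * deriv (besselI 0) y

noncomputable def D11 (x y : ℝ) : ℝ :=
  deriv (besselI 0) x * deriv (besselK 0) y - deriv (besselK 0) x * deriv (besselI 0) y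

namespace SeguraAux

/-- k-th term of the besselI series -/
noncomputable def bt (n k : ℕ) (x : ℝ) : ℝ :=
  (x / 2) ^ (2 * k + n) / ((Nat.factorial k : ℝ) * (Nat.factorial (k + n) : ℝ))

lemma besselI_eq (n : ℕ) (x : ℝ) : besselI n x = ∑' k, bt n k x := rfl

lemma besselI_fun (n : ℕ) : besselI n = fun x => ∑' k, bt n k x := rfl

lemma fact_pos' (k : ℕ) : (0:ℝ) < (Nat.factorial k : ℝ) :=
  Nat.cast_pos.mpr k.factorial_pos

lemma denom_pos (n k : ℕ) : (0:ℝ) < (k.factorial : ℝ) * ((k+n).factorial : ℝ) :=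
  mul_pos (fact_pos' k) (fact_pos' (k+n))

lemma one_le_fact (k : ℕ) : (1:ℝ) ≤ (k.factorial : ℝ) := by
  exact_mod_cast Nat.one_le_iff_ne_zero.mpr k.factorial_ne_zero

lemma norm_bt_le (n k : ℕ) (x : ℝ) :
    ‖bt n k x‖ ≤ |x/2|^n * (|x/2|^2)^k / k.factorial := by
  have h1 : ‖bt n k x‖ = |x/2|^(2*k+n) / ((k.factorial : ℝ) * ((k+n).factorial : ℝ)) := by
    rw [bt, Real.norm_eq_abs, abs_div, abs_pow, abs_of_pos (denom_pos n k)]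
  rw [h1]
  have h2 : |x/2|^(2*k+n) = |x/2|^n * (|x/2|^2)^k := by
    rw [← pow_mul, ← pow_add]; ring_nf
  rw [h2]
  rw [div_le_div_iff₀ (denom_pos n k) (fact_pos' k)]
  have h3 : (1:ℝ) ≤ ((k+n).factorial : ℝ) := one_le_fact _
  have h4 : (0:ℝ) ≤ |x/2|^n * (|x/2|^2)^k := by positivity
  have h5 := mul_le_mul_of_nonneg_left h3 (mul_nonneg h4 (fact_pos' k).le)
  nlinarith [h5]

lemma summable_norm_bt (n : ℕ) (x : ℝ) : Summable (fun k => ‖bt n k x‖) := by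
  have hs : Summable (fun k : ℕ => |x/2|^n * ((|x/2|^2)^k / k.factorial)) :=
    (Real.summable_pow_div_factorial (|x/2|^2)).mul_left (|x/2|^n)
  have hs' : Summable (fun k : ℕ => |x/2|^n * (|x/2|^2)^k / k.factorial) := by
    simpa only [mul_div_assoc] using hs
  exact Summable.of_nonneg_of_le (fun k => norm_nonneg _) (fun k => norm_bt_le n k x) hs'

lemma summable_bt (n : ℕ) (x : ℝ) : Summable (fun k => bt n k x) :=
  (summable_norm_bt n x).of_norm

lemma bt_nonneg (n k : ℕ) {x : ℝ} (hx : 0 ≤ x) : 0 ≤ bt n k x := by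
  have : (0:ℝ) ≤ x/2 := by linarith
  unfold bt; positivity

lemma bt_pos (n k : ℕ) {x : ℝ} (hx : 0 < x) : 0 < bt n k x := by
  have : (0:ℝ) < x/2 := by linarith
  unfold bt; positivity

lemma besselI_pos (n : ℕ) {r : ℝ} (hr : 0 < r) : 0 < besselI n r := by
  rw [besselI_eq]
  exact Summable.tsum_pos (summable_bt n r) (fun k => (bt_pos n k hr).le) 0 (bt_pos n 0 hr)


/-- derivative of the k-th term -/
noncomputable def bt' (n k : ℕ) (x : ℝ) : ℝ :=
  (2*k+n) * (x / 2) ^ (2*k+n-1) * (1/2) / ((Nat.factorial k : ℝ) * (Nat.factorial (k + n) : ℝ))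

lemma hasDerivAt_bt (n k : ℕ) (x : ℝ) : HasDerivAt (bt n k ·) (bt' n k x) x := by
  have h : HasDerivAt (fun y : ℝ => (y/2)^(2*k+n))
      ((2*k+n) * (x/2)^(2*k+n-1) * (1/2)) x := by
    simpa using (((hasDerivAt_id x).div_const 2).fun_pow (2*k+n))
  simpa [bt, bt', div_eq_mul_inv] using
    h.mul_const (((Nat.factorial k : ℝ) * (Nat.factorial (k + n) : ℝ))⁻¹)

lemma norm_bt'_le (n k : ℕ) {x R : ℝ} (hR : 1 ≤ R) (hx : |x| ≤ R) :
    ‖bt' n k x‖ ≤ (2*R)^n * ((2*R)^2)^k / k.factorial := by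
  have hRpos : (0:ℝ) < R := lt_of_lt_of_le one_pos hR
  have hxR : |x/2| ≤ R := by
    rw [abs_div]
    calc |x| / |(2:ℝ)| ≤ R / 1 := by
          apply div_le_div₀ (le_of_lt hRpos) hx (by norm_num) (by norm_num)
    _ = R := div_one R
  have h1 : ‖bt' n k x‖ = (2*(k:ℝ)+n) * |x/2|^(2*k+n-1) * (1/2) / ((k.factorial : ℝ) * ((k+n).factorial : ℝ)) := by
    rw [bt', Real.norm_eq_abs, abs_div, abs_of_pos (denom_pos n k), abs_mul, abs_mul, abs_pow,
      abs_of_nonneg (by positivity : (0:ℝ) ≤ 2*(k:ℝ)+n),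
      abs_of_pos (by norm_num : (0:ℝ) < 1/2)]
  rw [h1]
  have key : (2*(k:ℝ)+n) * |x/2|^(2*k+n-1) * (1/2) ≤ (2*R)^(2*k+n) := by
    have em : ((2*k+n:ℕ):ℝ) = 2*(k:ℝ)+n := by push_cast; ring
    rcases Nat.eq_zero_or_pos (2*k+n) with h0 | h0
    · have hk : k = 0 := by omega
      have hn : n = 0 := by omega
      subst hk; subst hn; norm_num
    · have e1 : ((2*k+n:ℕ):ℝ) ≤ 2^(2*k+n) := by exact_mod_cast (Nat.lt_two_pow_self (n := 2*k+n)).le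
      have e2 : |x/2|^(2*k+n-1) ≤ R^(2*k+n-1) := pow_le_pow_left₀ (abs_nonneg _) hxR _
      have e3 : R^(2*k+n-1) ≤ R^(2*k+n) := pow_le_pow_right₀ hR (Nat.sub_le _ 1)
      have e4 : (2*(k:ℝ)+n) * |x/2|^(2*k+n-1) ≤ 2^(2*k+n) * R^(2*k+n) := by
        rw [← em]
        apply mul_le_mul e1 (e2.trans e3) (by positivity) (by positivity)
      rw [mul_pow]
      nlinarith [pow_pos hRpos (2*k+n), pow_pos (two_pos (α := ℝ)) (2*k+n)]
  calc (2*(k:ℝ)+n) * |x/2|^(2*k+n-1) * (1/2) / ((k.factorial : ℝ) * ((k+n).factorial : ℝ))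
      ≤ (2*R)^(2*k+n) / (k.factorial : ℝ) := by
        apply div_le_div₀ (by positivity) key (fact_pos' k)
        calc (k.factorial : ℝ) = (k.factorial : ℝ) * 1 := (mul_one _).symm
        _ ≤ (k.factorial : ℝ) * ((k+n).factorial : ℝ) :=
            mul_le_mul_of_nonneg_left (one_le_fact _) (fact_pos' k).le
    _ = (2*R)^n * ((2*R)^2)^k / k.factorial := by
        rw [← pow_mul, ← pow_add]; ring_nf

lemma summable_deriv_bound (n : ℕ) (R : ℝ) :
    Summable (fun k : ℕ => (2*R)^n * ((2*R)^2)^k / k.factorial) := by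
  have hs : Summable (fun k : ℕ => (2*R)^n * (((2*R)^2)^k / k.factorial)) :=
    (Real.summable_pow_div_factorial ((2*R)^2)).mul_left _
  simpa only [mul_div_assoc] using hs

lemma hasDerivAt_besselI (n : ℕ) (x : ℝ) :
    HasDerivAt (besselI n) (∑' k, bt' n k x) x := by
  rw [besselI_fun]
  set R := |x| + 1 with hR
  have hR1 : 1 ≤ R := by have := abs_nonneg x; simp only [hR]; linarith
  have hmem : x ∈ Set.Ioo (-R) R := by
    constructor
    · simp only [hR]; linarith [neg_abs_le x]
    · simp only [hR]; linarith [le_abs_self x]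
  exact hasDerivAt_tsum_of_isPreconnected (summable_deriv_bound n R)
    isOpen_Ioo isPreconnected_Ioo
    (fun k y _ => hasDerivAt_bt n k y)
    (fun k y hy => norm_bt'_le n k hR1 (abs_le.mpr ⟨hy.1.le, hy.2.le⟩))
    hmem (summable_bt n x) hmem

lemma deriv_besselI (n : ℕ) (x : ℝ) : deriv (besselI n) x = ∑' k, bt' n k x :=
  (hasDerivAt_besselI n x).deriv

lemma summable_bt' (n : ℕ) (x : ℝ) : Summable (fun k => bt' n k x) := by
  set R := |x| + 1 with hR
  have hR1 : 1 ≤ R := by have := abs_nonneg x; simp only [hR]; linarith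
  apply Summable.of_norm
  apply Summable.of_nonneg_of_le (fun k => norm_nonneg _)
    (fun k => norm_bt'_le n k hR1 (by simp only [hR]; linarith))
  exact summable_deriv_bound n R
lemma tsum_shift {g : ℕ → ℝ} (hg : Summable g) (h0 : g 0 = 0) :
    ∑' k, g k = ∑' k, g (k+1) := by
  rw [Summable.tsum_eq_zero_add hg, h0, zero_add]

lemma fact_ne (k : ℕ) : (k.factorial : ℝ) ≠ 0 := (fact_pos' k).ne'

lemma der_id (n : ℕ) (r : ℝ) :
    r * deriv (besselI n) r = n * besselI n r + r * besselI (n+1) r := by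
  set g : ℕ → ℝ := fun k => r * bt' n k r - n * bt n k r with hgdef
  have h0 : g 0 = 0 := by
    simp only [hgdef, bt, bt']
    cases n with
    | zero => norm_num
    | succ m =>
      have hm : (m.factorial : ℝ) ≠ 0 := fact_ne m
      have hm1 : ((m+1).factorial : ℝ) ≠ 0 := fact_ne (m+1)
      simp only [Nat.mul_zero, Nat.zero_add, Nat.add_sub_cancel, Nat.factorial_zero,
        Nat.cast_one, one_mul, pow_succ]
      push_cast
      field_simp
      ring
  have hs : ∀ k, g (k+1) = r * bt (n+1) k r := by
    intro k
    have e1 : 2*(k+1)+n-1 = 2*k+(n+1) := by omega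
    have e2 : 2*(k+1)+n = (2*k+(n+1))+1 := by omega
    have e3 : (k+1)+n = k+(n+1) := by omega
    have hk : (k.factorial : ℝ) ≠ 0 := fact_ne k
    have hkn : ((k+(n+1)).factorial : ℝ) ≠ 0 := fact_ne _
    simp only [hgdef, bt, bt', e1, e2, e3, Nat.factorial_succ, pow_succ]
    push_cast
    field_simp
    ring
  have hsm : Summable g := ((summable_bt' n r).mul_left r).sub ((summable_bt n r).mul_left (n:ℝ))
  have key : r * (∑' k, bt' n k r) - n * (∑' k, bt n k r) = ∑' k, g k := by
    rw [← tsum_mul_left, ← tsum_mul_left,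
      ← Summable.tsum_sub ((summable_bt' n r).mul_left r) ((summable_bt n r).mul_left (n:ℝ))]
  have key2 : ∑' k, g k = r * besselI (n+1) r := by
    rw [tsum_shift hsm h0]
    simp only [hs]
    rw [tsum_mul_left, besselI_eq]
  rw [deriv_besselI, besselI_eq, besselI_eq] at *
  linarith [key, key2]

lemma rec_id (n : ℕ) (r : ℝ) :
    r * besselI n r = 2*(n+1) * besselI (n+1) r + r * besselI (n+2) r := by
  set g : ℕ → ℝ := fun k => r * bt n k r - 2*(n+1) * bt (n+1) k r with hgdef
  have h0 : g 0 = 0 := by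
    have hn : (n.factorial : ℝ) ≠ 0 := fact_ne n
    simp only [hgdef, bt, Nat.mul_zero, Nat.zero_add, Nat.factorial_zero, Nat.cast_one,
      one_mul, Nat.factorial_succ, pow_succ]
    push_cast
    field_simp
    ring
  have hs : ∀ k, g (k+1) = r * bt (n+2) k r := by
    intro k
    have e2 : 2*(k+1)+n = (2*k+(n+2)) := by omega
    have e2' : 2*(k+1)+(n+1) = (2*k+(n+2))+1 := by omega
    have e3 : (k+1)+n = k+(n+1) := by omega
    have e4 : (k+1)+(n+1) = (k+(n+1))+1 := by omega
    have e5 : k+(n+2) = (k+(n+1))+1 := by omega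
    have hk : (k.factorial : ℝ) ≠ 0 := fact_ne k
    have hkn : ((k+(n+1)).factorial : ℝ) ≠ 0 := fact_ne _
    simp only [hgdef, bt, e2, e2', e3, e4, e5, Nat.factorial_succ, pow_succ]
    push_cast
    field_simp
    ring
  have hsm : Summable g :=
    ((summable_bt n r).mul_left r).sub ((summable_bt (n+1) r).mul_left (2*((n:ℝ)+1)))
  have key : r * (∑' k, bt n k r) - 2*(n+1) * (∑' k, bt (n+1) k r) = ∑' k, g k := by
    rw [← tsum_mul_left, ← tsum_mul_left,
      ← Summable.tsum_sub ((summable_bt n r).mul_left r) ((summable_bt (n+1) r).mul_left (2*((n:ℝ)+1)))]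
  have key2 : ∑' k, g k = r * besselI (n+2) r := by
    rw [tsum_shift hsm h0]
    simp only [hs]
    rw [tsum_mul_left, besselI_eq]
  rw [besselI_eq, besselI_eq, besselI_eq]
  rw [besselI_eq] at key2
  push_cast at *
  linarith [key, key2]
lemma nat_vandermonde (μ ν m : ℕ) :
    ∑ j ∈ Finset.range (m+1), (m+μ).choose (j+μ) * (m+ν).choose j
      = (2*m+μ+ν).choose (m+μ+ν) := by
  have h := Nat.add_choose_eq (m+μ) (m+ν) (m+μ+ν)
  rw [show (m+μ)+(m+ν) = 2*m+μ+ν by ring] at h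
  rw [h, Finset.Nat.sum_antidiagonal_eq_sum_range_succ_mk]
  have hzero : ∀ i ∈ Finset.range (m+μ+ν+1), i ∉ Finset.Ico μ (m+μ+1) →
      (m+μ).choose i * (m+ν).choose (m+μ+ν-i) = 0 := by
    intro i _ hi
    rw [Finset.mem_Ico, not_and_or, not_le, not_lt] at hi
    rcases hi with hi | hi
    · rw [Nat.choose_eq_zero_of_lt (by omega : m+ν < m+μ+ν-i), mul_zero]
    · rw [Nat.choose_eq_zero_of_lt (by omega : m+μ < i), zero_mul]
  rw [← Finset.sum_subset (by intro i hi; rw [Finset.mem_Ico] at hi; rw [Finset.mem_range]; omega)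
    hzero]
  rw [Finset.sum_Ico_eq_sum_range]
  rw [show m+μ+1-μ = m+1 by omega]
  apply Finset.sum_congr rfl
  intro j hj
  rw [Finset.mem_range] at hj
  rw [show m+μ+ν-(μ+j) = (m+ν) - j by omega, Nat.choose_symm (by omega : j ≤ m+ν),
    show μ + j = j + μ by ring]

lemma real_vandermonde (μ ν m : ℕ) :
    ∑ j ∈ Finset.range (m+1),
        ((j.factorial : ℝ) * ((j+μ).factorial : ℝ) * ((m-j).factorial : ℝ) * (((m-j)+ν).factorial : ℝ))⁻¹
      = ((2*m+μ+ν).choose (m+μ+ν) : ℝ) / (((m+μ).factorial : ℝ) * ((m+ν).factorial : ℝ)) := by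
  rw [← nat_vandermonde μ ν m]
  push_cast
  rw [Finset.sum_div]
  apply Finset.sum_congr rfl
  intro j hj
  rw [Finset.mem_range] at hj
  have hjm : j ≤ m := by omega
  have hc1 : ((m+μ).choose (j+μ) : ℝ) = ((m+μ).factorial : ℝ) / (((j+μ).factorial : ℝ) * ((m-j).factorial : ℝ)) := by
    rw [Nat.cast_choose ℝ (by omega : j+μ ≤ m+μ)]
    rw [show m+μ-(j+μ) = m-j by omega]
  have hc2 : ((m+ν).choose j : ℝ) = ((m+ν).factorial : ℝ) / ((j.factorial : ℝ) * (((m-j)+ν).factorial : ℝ)) := by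
    rw [Nat.cast_choose ℝ (by omega : j ≤ m+ν)]
    rw [show m+ν-j = (m-j)+ν by omega]
  rw [hc1, hc2]
  have f1 := fact_ne (j+μ); have f2 := fact_ne (m-j); have f3 := fact_ne j
  have f4 := fact_ne ((m-j)+ν); have f5 := fact_ne (m+μ); have f6 := fact_ne (m+ν)
  field_simp

lemma bt_mul_bt (a b j m : ℕ) (hj : j ≤ m) (r : ℝ) :
    bt a j r * bt b (m-j) r
      = (r/2)^(2*m+a+b) *
        ((j.factorial : ℝ) * ((j+a).factorial : ℝ) * ((m-j).factorial : ℝ) * (((m-j)+b).factorial : ℝ))⁻¹ := by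
  unfold bt
  rw [div_mul_div_comm, ← pow_add]
  rw [show 2*j+a+(2*(m-j)+b) = 2*m+a+b by omega]
  rw [div_eq_mul_inv]
  congr 1
  rw [mul_inv]
  ring_nf

lemma coeff_pos (n m : ℕ) {r : ℝ} (hr : 0 < r) :
    ∑ j ∈ Finset.range (m+1), bt n j r * bt (n+2) (m-j) r
      < ∑ j ∈ Finset.range (m+1), bt (n+1) j r * bt (n+1) (m-j) r := by
  have h1 : ∑ j ∈ Finset.range (m+1), bt (n+1) j r * bt (n+1) (m-j) r
      = (r/2)^(2*m+(n+1)+(n+1)) * (((2*m+(n+1)+(n+1)).choose (m+(n+1)+(n+1)) : ℝ)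
          / (((m+(n+1)).factorial : ℝ) * ((m+(n+1)).factorial : ℝ))) := by
    rw [← real_vandermonde (n+1) (n+1) m, Finset.mul_sum]
    exact Finset.sum_congr rfl fun j hj =>
      bt_mul_bt (n+1) (n+1) j m (Nat.lt_succ_iff.mp (Finset.mem_range.mp hj)) r
  have h2 : ∑ j ∈ Finset.range (m+1), bt n j r * bt (n+2) (m-j) r
      = (r/2)^(2*m+(n+1)+(n+1)) * (((2*m+(n+1)+(n+1)).choose (m+(n+1)+(n+1)) : ℝ)
          / (((m+n).factorial : ℝ) * ((m+(n+2)).factorial : ℝ))) := by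
    have hv := real_vandermonde n (n+2) m
    rw [show 2*m+n+(n+2) = 2*m+(n+1)+(n+1) by omega,
      show m+n+(n+2) = m+(n+1)+(n+1) by omega] at hv
    rw [← hv, Finset.mul_sum]
    refine Finset.sum_congr rfl fun j hj => ?_
    rw [bt_mul_bt n (n+2) j m (Nat.lt_succ_iff.mp (Finset.mem_range.mp hj)) r]
    rw [show 2*m+n+(n+2) = 2*m+(n+1)+(n+1) by omega]
  rw [h1, h2]
  have hC : (0:ℝ) < ((2*m+(n+1)+(n+1)).choose (m+(n+1)+(n+1)) : ℝ) := by
    exact_mod_cast Nat.choose_pos (by omega)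
  have hA2 : (0:ℝ) < ((m+(n+1)).factorial : ℝ) * ((m+(n+1)).factorial : ℝ) := by
    have := fact_pos' (m+(n+1)); nlinarith
  have hAB : ((m+(n+1)).factorial : ℝ) * ((m+(n+1)).factorial : ℝ)
      < ((m+n).factorial : ℝ) * ((m+(n+2)).factorial : ℝ) := by
    rw [show m+(n+2) = (m+(n+1))+1 by omega, Nat.factorial_succ,
      show m+(n+1) = (m+n)+1 by omega, Nat.factorial_succ]
    have hF := fact_pos' (m+n)
    push_cast
    nlinarith [mul_pos (mul_pos hF hF) (show (0:ℝ) < (m:ℝ)+(n:ℝ)+1 by positivity)]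
  have hpow : (0:ℝ) < (r/2)^(2*m+(n+1)+(n+1)) := by positivity
  apply mul_lt_mul_of_pos_left _ hpow
  exact div_lt_div_of_pos_left hC hA2 hAB
lemma turan (n : ℕ) {r : ℝ} (hr : 0 < r) :
    besselI n r * besselI (n+2) r < besselI (n+1) r * besselI (n+1) r := by
  have e1 : besselI (n+1) r * besselI (n+1) r
      = ∑' m, ∑ j ∈ Finset.range (m+1), bt (n+1) j r * bt (n+1) (m-j) r := by
    rw [besselI_eq]
    exact tsum_mul_tsum_eq_tsum_sum_range_of_summable_norm
      (summable_norm_bt (n+1) r) (summable_norm_bt (n+1) r)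
  have e2 : besselI n r * besselI (n+2) r
      = ∑' m, ∑ j ∈ Finset.range (m+1), bt n j r * bt (n+2) (m-j) r := by
    rw [besselI_eq, besselI_eq]
    exact tsum_mul_tsum_eq_tsum_sum_range_of_summable_norm
      (summable_norm_bt n r) (summable_norm_bt (n+2) r)
  rw [e1, e2]
  have s1 : Summable (fun m => ∑ j ∈ Finset.range (m+1), bt (n+1) j r * bt (n+1) (m-j) r) :=
    (summable_norm_sum_mul_range_of_summable_norm
      (summable_norm_bt (n+1) r) (summable_norm_bt (n+1) r)).of_norm
  have s2 : Summable (fun m => ∑ j ∈ Finset.range (m+1), bt n j r * bt (n+2) (m-j) r) :=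
    (summable_norm_sum_mul_range_of_summable_norm
      (summable_norm_bt n r) (summable_norm_bt (n+2) r)).of_norm
  exact Summable.tsum_lt_tsum (fun m => (coeff_pos n m hr).le) (coeff_pos n 0 hr) s2 s1

end SeguraAux


theorem segura_bound (n : ℕ) (r : ℝ) (hr : 0 < r) :
    r * deriv (besselI n) r / besselI n r > Real.sqrt (((n : ℝ) + 1) ^ 2 + r ^ 2) - 1 := by
  open SeguraAux in
  have h0 : 0 < besselI n r := besselI_pos n hr
  have h1 : 0 < besselI (n+1) r := SeguraAux.besselI_pos (n+1) hr
  set I0 := besselI n r with hI0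
  set I1 := besselI (n+1) r with hI1
  set I2 := besselI (n+2) r with hI2
  set s := Real.sqrt (((n : ℝ) + 1) ^ 2 + r ^ 2) with hs
  have hder : r * deriv (besselI n) r = n * I0 + r * I1 := SeguraAux.der_id n r
  have hrec : r * I0 = 2*((n:ℝ)+1) * I1 + r * I2 := by
    have := SeguraAux.rec_id n r
    push_cast at this ⊢
    linarith
  have hturan : I0 * I2 < I1 * I1 := SeguraAux.turan n hr
  have hs2 : s^2 = ((n:ℝ)+1)^2 + r^2 := Real.sq_sqrt (by positivity)
  have hs0 : 0 ≤ s := Real.sqrt_nonneg _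
  have hrhs0 : 0 ≤ r * I1 + ((n:ℝ)+1) * I0 := by positivity
  have h3 : (r*I0)*(r*I0) = (2*((n:ℝ)+1) * I1 + r * I2)*(r*I0) := by rw [← hrec]
  have expand : (r * I1 + ((n:ℝ)+1) * I0)^2 - (s*I0)^2 = r^2*(I1*I1 - I0*I2) := by
    have e : (s*I0)^2 = ((n:ℝ)+1)^2*I0^2 + r^2*I0^2 := by rw [mul_pow, hs2]; ring
    rw [e]
    linear_combination -h3
  have hsqlt : (s * I0)^2 < (r * I1 + ((n:ℝ)+1) * I0)^2 := by
    have hpos : 0 < r^2*(I1*I1 - I0*I2) := mul_pos (by positivity) (sub_pos.mpr hturan)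
    linarith [expand]
  have key : s * I0 < r * I1 + ((n:ℝ)+1) * I0 := lt_of_pow_lt_pow_left₀ 2 hrhs0 hsqlt
  rw [gt_iff_lt, lt_div_iff₀ h0, hder]
  nlinarith [key, h0]
end

section
/- Fix r > 0. The function F(η) = η · I_1(r/η) / I_0(r/η), defined for η > 0, is strictly monotone increasing in η. -/
open Real

/-! ### Auxiliary lemmas -/

private lemma u_summable (C : ℝ) : Summable fun k : ℕ => C * (2 * C ^ 2) ^ k / (k.factorial : ℝ) := by
  have := (Real.summable_pow_div_factorial (2 * C ^ 2)).mul_left C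
  simpa [mul_div_assoc] using this

private lemma key_bound {C y : ℝ} (hC : 1 ≤ C) (hy : |y| ≤ 2 * C) {e k : ℕ}
    (he : e ≤ 2 * k + 1) {a : ℝ} (ha : 0 ≤ a) (ha' : a ≤ 2 ^ k) {b : ℝ}
    (hb : (k.factorial : ℝ) ≤ b) :
    |a * (y / 2) ^ e / b| ≤ C * (2 * C ^ 2) ^ k / (k.factorial : ℝ) := by
  have hfac : (0 : ℝ) < (k.factorial : ℝ) := by positivity
  have hb0 : (0 : ℝ) < b := lt_of_lt_of_le hfac hb
  have h1 : |y / 2| ≤ C := by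
    rw [abs_div, abs_of_pos (by norm_num : (0:ℝ) < 2)]
    linarith
  have h2 : |y / 2| ^ e ≤ C ^ (2 * k + 1) := by
    calc |y / 2| ^ e ≤ C ^ e := pow_le_pow_left₀ (abs_nonneg _) h1 e
    _ ≤ C ^ (2 * k + 1) := pow_le_pow_right₀ hC he
  have h3 : |a * (y / 2) ^ e / b| = a * |y / 2| ^ e / b := by
    rw [abs_div, abs_mul, abs_pow, abs_of_nonneg ha, abs_of_pos hb0]
  rw [h3]
  calc a * |y / 2| ^ e / b ≤ 2 ^ k * C ^ (2 * k + 1) / (k.factorial : ℝ) := by gcongr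
    _ = C * (2 * C ^ 2) ^ k / (k.factorial : ℝ) := by
        rw [mul_pow, pow_add, pow_mul, pow_one]; ring

private lemma cast_le_two_pow (k : ℕ) : (k : ℝ) ≤ 2 ^ k := by
  exact_mod_cast (Nat.lt_two_pow_self (n := k)).le

private lemma one_le_fact (k : ℕ) : (1 : ℝ) ≤ (k.factorial : ℝ) := by
  exact_mod_cast Nat.one_le_iff_ne_zero.mpr k.factorial_ne_zero

private lemma fact_pos (k : ℕ) : (0 : ℝ) < (k.factorial : ℝ) := by positivity

/-- summability of the besselI series -/
private lemma summable_besselI (n : ℕ) (hn : n ≤ 1) (x : ℝ) :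
    Summable fun k : ℕ => (x / 2) ^ (2 * k + n) / ((k.factorial : ℝ) * ((k + n).factorial : ℝ)) := by
  set C : ℝ := max 1 (|x| / 2) with hCdef
  have hC : 1 ≤ C := le_max_left _ _
  have hy : |x| ≤ 2 * C := by
    have : |x| / 2 ≤ C := le_max_right _ _
    linarith
  apply Summable.of_norm_bounded (u_summable C)
  intro k
  have hb : (k.factorial : ℝ) ≤ (k.factorial : ℝ) * ((k + n).factorial : ℝ) :=
    le_mul_of_one_le_right (fact_pos k).le (one_le_fact _)
  have hbd := key_bound hC hy (e := 2 * k + n) (k := k) (by omega)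
    (zero_le_one) (one_le_pow₀ (by norm_num)) hb
  calc ‖(x / 2) ^ (2 * k + n) / ((k.factorial : ℝ) * ((k + n).factorial : ℝ))‖
      = |1 * (x / 2) ^ (2 * k + n) / ((k.factorial : ℝ) * ((k + n).factorial : ℝ))| := by
        rw [Real.norm_eq_abs, one_mul]
    _ ≤ _ := hbd

/-- summability of the termwise derivative of the `I₀` series -/
private lemma summable_d0 (x : ℝ) :
    Summable fun k : ℕ =>
      (2 * k : ℕ) * (x / 2) ^ (2 * k - 1) * (1 / 2) / ((k.factorial : ℝ) * (k.factorial : ℝ)) := by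
  set C : ℝ := max 1 (|x| / 2) with hCdef
  have hC : 1 ≤ C := le_max_left _ _
  have hy : |x| ≤ 2 * C := by
    have : |x| / 2 ≤ C := le_max_right _ _
    linarith
  apply Summable.of_norm_bounded (u_summable C)
  intro k
  have hb : (k.factorial : ℝ) ≤ (k.factorial : ℝ) * (k.factorial : ℝ) :=
    le_mul_of_one_le_right (fact_pos k).le (one_le_fact _)
  have hre : ((2 * k : ℕ) : ℝ) * (x / 2) ^ (2 * k - 1) * (1 / 2) / ((k.factorial : ℝ) * (k.factorial : ℝ))
      = (k : ℝ) * (x / 2) ^ (2 * k - 1) / ((k.factorial : ℝ) * (k.factorial : ℝ)) := by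
    push_cast; ring
  rw [Real.norm_eq_abs, hre]
  exact key_bound hC hy (by omega) k.cast_nonneg (cast_le_two_pow k) hb

/-- summability of the termwise derivative of the `I₁` series -/
private lemma summable_d1 (x : ℝ) :
    Summable fun k : ℕ =>
      ((2 * k + 1 : ℕ) : ℝ) * (x / 2) ^ (2 * k) * (1 / 2) /
        ((k.factorial : ℝ) * ((k + 1).factorial : ℝ)) := by
  set C : ℝ := max 1 (|x| / 2) with hCdef
  have hC : 1 ≤ C := le_max_left _ _
  have hy : |x| ≤ 2 * C := by
    have : |x| / 2 ≤ C := le_max_right _ _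
    linarith
  apply Summable.of_norm_bounded (u_summable C)
  intro k
  have hb : (k.factorial : ℝ) ≤ (k.factorial : ℝ) * ((k + 1).factorial : ℝ) :=
    le_mul_of_one_le_right (fact_pos k).le (one_le_fact _)
  have hre : ((2 * k + 1 : ℕ) : ℝ) * (x / 2) ^ (2 * k) * (1 / 2) /
        ((k.factorial : ℝ) * ((k + 1).factorial : ℝ))
      = ((k : ℝ) + 1 / 2) * (x / 2) ^ (2 * k) / ((k.factorial : ℝ) * ((k + 1).factorial : ℝ)) := by
    push_cast; ring
  have hcoef : (k : ℝ) + 1 / 2 ≤ 2 ^ k := by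
    have h1 : ((k : ℝ) + 1) ≤ 2 ^ k := by
      exact_mod_cast Nat.succ_le_of_lt (Nat.lt_two_pow_self (n := k))
    linarith
  rw [Real.norm_eq_abs, hre]
  exact key_bound hC hy (by omega) (by positivity) hcoef hb
-- appended to part1
private lemma hasDerivAt_I0_aux (x : ℝ) :
    HasDerivAt (besselI 0)
      (∑' k : ℕ, ((2 * k : ℕ) : ℝ) * (x / 2) ^ (2 * k - 1) * (1 / 2) /
        ((k.factorial : ℝ) * (k.factorial : ℝ))) x := by
  have hdef : besselI 0 = fun y : ℝ =>
      ∑' k : ℕ, (y / 2) ^ (2 * k) / ((k.factorial : ℝ) * (k.factorial : ℝ)) := by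
    funext y; simp [besselI]
  rw [hdef]
  set R : ℝ := |x| + 1 with hR
  set C : ℝ := max 1 (R / 2) with hCdef
  have hC : 1 ≤ C := le_max_left _ _
  have hRC : R ≤ 2 * C := by
    have : R / 2 ≤ C := le_max_right _ _
    linarith
  have hxball : x ∈ Metric.ball (0 : ℝ) R := by
    have : |x| < R := by rw [hR]; linarith
    simpa [Real.dist_eq] using this
  apply hasDerivAt_tsum_of_isPreconnected (u_summable C) Metric.isOpen_ball
    (convex_ball (0:ℝ) R).isPreconnected
    (g := fun k y => (y / 2) ^ (2 * k) / ((k.factorial : ℝ) * (k.factorial : ℝ)))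
    (g' := fun k y => ((2 * k : ℕ) : ℝ) * (y / 2) ^ (2 * k - 1) * (1 / 2) /
        ((k.factorial : ℝ) * (k.factorial : ℝ)))
    (y₀ := x) ?_ ?_ hxball ?_ hxball
  · intro k y _
    exact (((hasDerivAt_id y).div_const 2).pow (2 * k)).div_const _
  · intro k y hy
    have hyR : |y| ≤ 2 * C := by
      have : |y| < R := by simpa [Real.dist_eq] using hy
      linarith
    have hb : (k.factorial : ℝ) ≤ (k.factorial : ℝ) * (k.factorial : ℝ) :=
      le_mul_of_one_le_right (fact_pos k).le (one_le_fact _)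
    have hre : ((2 * k : ℕ) : ℝ) * (y / 2) ^ (2 * k - 1) * (1 / 2) /
          ((k.factorial : ℝ) * (k.factorial : ℝ))
        = (k : ℝ) * (y / 2) ^ (2 * k - 1) / ((k.factorial : ℝ) * (k.factorial : ℝ)) := by
      push_cast; ring
    rw [Real.norm_eq_abs]
    beta_reduce
    rw [hre]
    exact key_bound hC hyR (by omega) k.cast_nonneg (cast_le_two_pow k) hb
  · simpa using summable_besselI 0 (by norm_num) x

private lemma d0_eq (x : ℝ) :
    (∑' k : ℕ, ((2 * k : ℕ) : ℝ) * (x / 2) ^ (2 * k - 1) * (1 / 2) /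
        ((k.factorial : ℝ) * (k.factorial : ℝ))) = besselI 1 x := by
  rw [Summable.tsum_eq_zero_add (summable_d0 x)]
  have h0 : ((2 * 0 : ℕ) : ℝ) * (x / 2) ^ (2 * 0 - 1) * (1 / 2) /
      (((0:ℕ).factorial : ℝ) * ((0:ℕ).factorial : ℝ)) = 0 := by norm_num
  rw [h0, zero_add, besselI]
  apply tsum_congr
  intro k
  have he : 2 * (k + 1) - 1 = 2 * k + 1 := by omega
  rw [he, Nat.factorial_succ]
  have hf : (k.factorial : ℝ) ≠ 0 := (fact_pos k).ne'
  have hk1 : ((k : ℝ) + 1) ≠ 0 := by positivity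
  push_cast
  field_simp

private lemma hasDerivAt_I0 (x : ℝ) : HasDerivAt (besselI 0) (besselI 1 x) x :=
  d0_eq x ▸ hasDerivAt_I0_aux x

private lemma hasDerivAt_I1_aux (x : ℝ) :
    HasDerivAt (besselI 1)
      (∑' k : ℕ, ((2 * k + 1 : ℕ) : ℝ) * (x / 2) ^ (2 * k) * (1 / 2) /
        ((k.factorial : ℝ) * ((k + 1).factorial : ℝ))) x := by
  have hdef : besselI 1 = fun y : ℝ =>
      ∑' k : ℕ, (y / 2) ^ (2 * k + 1) / ((k.factorial : ℝ) * ((k + 1).factorial : ℝ)) := by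
    funext y; simp [besselI]
  rw [hdef]
  set R : ℝ := |x| + 1 with hR
  set C : ℝ := max 1 (R / 2) with hCdef
  have hC : 1 ≤ C := le_max_left _ _
  have hRC : R ≤ 2 * C := by
    have : R / 2 ≤ C := le_max_right _ _
    linarith
  have hxball : x ∈ Metric.ball (0 : ℝ) R := by
    have : |x| < R := by rw [hR]; linarith
    simpa [Real.dist_eq] using this
  apply hasDerivAt_tsum_of_isPreconnected (u_summable C) Metric.isOpen_ball
    (convex_ball (0:ℝ) R).isPreconnected
    (g := fun k y => (y / 2) ^ (2 * k + 1) / ((k.factorial : ℝ) * ((k + 1).factorial : ℝ)))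
    (g' := fun k y => ((2 * k + 1 : ℕ) : ℝ) * (y / 2) ^ (2 * k) * (1 / 2) /
        ((k.factorial : ℝ) * ((k + 1).factorial : ℝ)))
    (y₀ := x) ?_ ?_ hxball ?_ hxball
  · intro k y _
    have := (((hasDerivAt_id y).div_const 2).pow (2 * k + 1)).div_const
      ((k.factorial : ℝ) * ((k + 1).factorial : ℝ))
    simpa [Nat.add_sub_cancel] using this
  · intro k y hy
    have hyR : |y| ≤ 2 * C := by
      have : |y| < R := by simpa [Real.dist_eq] using hy
      linarith
    have hb : (k.factorial : ℝ) ≤ (k.factorial : ℝ) * ((k + 1).factorial : ℝ) :=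
      le_mul_of_one_le_right (fact_pos k).le (one_le_fact _)
    have hre : ((2 * k + 1 : ℕ) : ℝ) * (y / 2) ^ (2 * k) * (1 / 2) /
          ((k.factorial : ℝ) * ((k + 1).factorial : ℝ))
        = ((k : ℝ) + 1 / 2) * (y / 2) ^ (2 * k) / ((k.factorial : ℝ) * ((k + 1).factorial : ℝ)) := by
      push_cast; ring
    have hcoef : (k : ℝ) + 1 / 2 ≤ 2 ^ k := by
      have h1 : ((k : ℝ) + 1) ≤ 2 ^ k := by
        exact_mod_cast Nat.succ_le_of_lt (Nat.lt_two_pow_self (n := k))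
      linarith
    rw [Real.norm_eq_abs]
    beta_reduce
    rw [hre]
    exact key_bound hC hyR (by omega) (by positivity) hcoef hb
  · exact summable_besselI 1 (le_refl 1) x

private lemma xD1_eq (x : ℝ) :
    x * (∑' k : ℕ, ((2 * k + 1 : ℕ) : ℝ) * (x / 2) ^ (2 * k) * (1 / 2) /
        ((k.factorial : ℝ) * ((k + 1).factorial : ℝ)))
      = x * besselI 0 x - besselI 1 x := by
  have hs0 : Summable fun k : ℕ =>
      x * ((x / 2) ^ (2 * k) / ((k.factorial : ℝ) * (k.factorial : ℝ))) := by
    apply Summable.mul_left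
    simpa using summable_besselI 0 (by norm_num) x
  have hs1 : Summable fun k : ℕ =>
      (x / 2) ^ (2 * k + 1) / ((k.factorial : ℝ) * ((k + 1).factorial : ℝ)) := by
    simpa using summable_besselI 1 (le_refl 1) x
  have h0 : besselI 0 x = ∑' k : ℕ, (x / 2) ^ (2 * k) / ((k.factorial : ℝ) * (k.factorial : ℝ)) := by
    simp [besselI]
  have h1 : besselI 1 x
      = ∑' k : ℕ, (x / 2) ^ (2 * k + 1) / ((k.factorial : ℝ) * ((k + 1).factorial : ℝ)) := by
    simp [besselI]
  rw [h0, h1, ← tsum_mul_left, ← tsum_mul_left, ← Summable.tsum_sub hs0 hs1]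
  apply tsum_congr
  intro k
  have hf : (k.factorial : ℝ) ≠ 0 := (fact_pos k).ne'
  have hk1 : ((k : ℝ) + 1) ≠ 0 := by positivity
  rw [pow_succ, Nat.factorial_succ]
  push_cast
  field_simp
  ring

private lemma hasDerivAt_I1 {x : ℝ} (hx : x ≠ 0) :
    HasDerivAt (besselI 1) (besselI 0 x - besselI 1 x / x) x := by
  have h := hasDerivAt_I1_aux x
  set S : ℝ := ∑' k : ℕ, ((2 * k + 1 : ℕ) : ℝ) * (x / 2) ^ (2 * k) * (1 / 2) /
        ((k.factorial : ℝ) * ((k + 1).factorial : ℝ)) with hSdef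
  have heq : S = besselI 0 x - besselI 1 x / x := by
    calc S = x * S / x := (mul_div_cancel_left₀ _ hx).symm
    _ = (x * besselI 0 x - besselI 1 x) / x := by rw [xD1_eq x]
    _ = besselI 0 x - besselI 1 x / x := by
        rw [sub_div, mul_div_cancel_left₀ _ hx]
  rwa [heq] at h
-- part 3
private lemma I0_pos (x : ℝ) : 0 < besselI 0 x := by
  have hs : Summable fun k : ℕ => (x / 2) ^ (2 * k) / ((k.factorial : ℝ) * (k.factorial : ℝ)) := by
    simpa using summable_besselI 0 (by norm_num) x
  have h0 : besselI 0 x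
      = ∑' k : ℕ, (x / 2) ^ (2 * k) / ((k.factorial : ℝ) * (k.factorial : ℝ)) := by
    simp [besselI]
  have hterm : ∀ k : ℕ, 0 ≤ (x / 2) ^ (2 * k) / ((k.factorial : ℝ) * (k.factorial : ℝ)) := by
    intro k
    rw [pow_mul]
    positivity
  rw [h0]
  calc (0 : ℝ) < 1 := one_pos
    _ = (x / 2) ^ (2 * 0) / (((0:ℕ).factorial : ℝ) * ((0:ℕ).factorial : ℝ)) := by norm_num
    _ ≤ _ := Summable.le_tsum hs 0 fun j _ => hterm j

private lemma I1_pos {x : ℝ} (hx : 0 < x) : 0 < besselI 1 x := by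
  have hs : Summable fun k : ℕ =>
      (x / 2) ^ (2 * k + 1) / ((k.factorial : ℝ) * ((k + 1).factorial : ℝ)) := by
    simpa using summable_besselI 1 (le_refl 1) x
  have h1 : besselI 1 x
      = ∑' k : ℕ, (x / 2) ^ (2 * k + 1) / ((k.factorial : ℝ) * ((k + 1).factorial : ℝ)) := by
    simp [besselI]
  have hterm : ∀ k : ℕ, 0 ≤ (x / 2) ^ (2 * k + 1) / ((k.factorial : ℝ) * ((k + 1).factorial : ℝ)) := by
    intro k; positivity
  rw [h1]
  calc (0 : ℝ) < x / 2 := by linarith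
    _ = (x / 2) ^ (2 * 0 + 1) / (((0:ℕ).factorial : ℝ) * ((0 + 1:ℕ).factorial : ℝ)) := by norm_num
    _ ≤ _ := Summable.le_tsum hs 0 fun j _ => hterm j

private lemma I1_lt {x : ℝ} (hx : 0 < x) : besselI 1 x < x / 2 * besselI 0 x := by
  rw [← sub_pos]
  have hs0 : Summable fun k : ℕ =>
      x / 2 * ((x / 2) ^ (2 * k) / ((k.factorial : ℝ) * (k.factorial : ℝ))) := by
    apply Summable.mul_left
    simpa using summable_besselI 0 (by norm_num) x
  have hs1 : Summable fun k : ℕ =>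
      (x / 2) ^ (2 * k + 1) / ((k.factorial : ℝ) * ((k + 1).factorial : ℝ)) := by
    simpa using summable_besselI 1 (le_refl 1) x
  have h0 : besselI 0 x
      = ∑' k : ℕ, (x / 2) ^ (2 * k) / ((k.factorial : ℝ) * (k.factorial : ℝ)) := by
    simp [besselI]
  have h1 : besselI 1 x
      = ∑' k : ℕ, (x / 2) ^ (2 * k + 1) / ((k.factorial : ℝ) * ((k + 1).factorial : ℝ)) := by
    simp [besselI]
  rw [h0, h1, ← tsum_mul_left, ← Summable.tsum_sub hs0 hs1]
  have hterm : ∀ k : ℕ, 0 ≤ x / 2 * ((x / 2) ^ (2 * k) / ((k.factorial : ℝ) * (k.factorial : ℝ)))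
      - (x / 2) ^ (2 * k + 1) / ((k.factorial : ℝ) * ((k + 1).factorial : ℝ)) := by
    intro k
    have hre : x / 2 * ((x / 2) ^ (2 * k) / ((k.factorial : ℝ) * (k.factorial : ℝ)))
        = (x / 2) ^ (2 * k + 1) / ((k.factorial : ℝ) * (k.factorial : ℝ)) := by
      rw [pow_succ]; ring
    rw [hre, sub_nonneg]
    have hfle : (k.factorial : ℝ) ≤ ((k + 1).factorial : ℝ) := by
      exact_mod_cast Nat.factorial_le (Nat.le_succ k)
    gcongr
  apply Summable.tsum_pos (hs0.sub hs1) hterm 1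
  have : ((1:ℕ).factorial : ℝ) = 1 := by norm_num [Nat.factorial]
  have h2 : ((1 + 1:ℕ).factorial : ℝ) = 2 := by norm_num [Nat.factorial]
  rw [show (2 * 1 : ℕ) = 2 from rfl, show (2 * 1 + 1 : ℕ) = 3 from rfl, this, h2]
  have hx2 : 0 < (x / 2) ^ 3 := by positivity
  calc (0:ℝ) < (x / 2) ^ 3 / 2 := by positivity
    _ = x / 2 * ((x / 2) ^ 2 / (1 * 1)) - (x / 2) ^ 3 / (1 * 2) := by ring
-- part 4
private noncomputable def hfun (x : ℝ) : ℝ :=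
  2 * besselI 0 x * besselI 1 x - x * besselI 0 x ^ 2 + x * besselI 1 x ^ 2

private lemma I1_zero : besselI 1 0 = 0 := by
  have : ∀ k : ℕ, ((0:ℝ) / 2) ^ (2 * k + 1) / ((k.factorial : ℝ) * ((k + 1).factorial : ℝ)) = 0 := by
    intro k; norm_num
  rw [besselI]
  rw [tsum_congr this, tsum_zero]

private lemma cont_I0 : Continuous (besselI 0) :=
  continuous_iff_continuousAt.mpr fun x => (hasDerivAt_I0 x).continuousAt

private lemma cont_I1 : Continuous (besselI 1) :=
  continuous_iff_continuousAt.mpr fun x => (hasDerivAt_I1_aux x).continuousAt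

private lemma cont_hfun : Continuous hfun := by
  unfold hfun
  exact (((continuous_const.mul cont_I0).mul cont_I1).sub
    (continuous_id.mul (cont_I0.pow 2))).add (continuous_id.mul (cont_I1.pow 2))

private lemma hasDerivAt_hfun {x : ℝ} (hx : x ≠ 0) :
    HasDerivAt hfun
      (besselI 0 x ^ 2 + besselI 1 x ^ 2 - 2 * besselI 0 x * besselI 1 x / x) x := by
  have hI0 := hasDerivAt_I0 x
  have hI1 := hasDerivAt_I1 hx
  have t1 : HasDerivAt (fun y => 2 * besselI 0 y * besselI 1 y)
      (2 * besselI 1 x * besselI 1 x + 2 * besselI 0 x * (besselI 0 x - besselI 1 x / x)) x :=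
    (hI0.const_mul 2).mul hI1
  have t2 : HasDerivAt (fun y => y * besselI 0 y ^ 2)
      (1 * besselI 0 x ^ 2 + x * ((2 : ℕ) * besselI 0 x ^ 1 * besselI 1 x)) x :=
    (hasDerivAt_id x).mul (hI0.pow 2)
  have t3 : HasDerivAt (fun y => y * besselI 1 y ^ 2)
      (1 * besselI 1 x ^ 2 + x * ((2 : ℕ) * besselI 1 x ^ 1 * (besselI 0 x - besselI 1 x / x))) x :=
    (hasDerivAt_id x).mul (hI1.pow 2)
  have := (t1.sub t2).add t3
  convert this using 1
  · rfl
  · rfl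
  · rfl
  push_cast
  linear_combination (2 * besselI 1 x ^ 2) * (mul_inv_cancel₀ hx)

private lemma hfun_zero : hfun 0 = 0 := by
  simp [hfun, I1_zero]

private lemma hfun_pos {x : ℝ} (hx : 0 < x) : 0 < hfun x := by
  have hmono : StrictMonoOn hfun (Set.Ici 0) := by
    apply strictMonoOn_of_deriv_pos (convex_Ici 0) cont_hfun.continuousOn
    intro y hy
    rw [interior_Ici] at hy
    have hy0 : (0:ℝ) < y := hy
    rw [(hasDerivAt_hfun hy0.ne').deriv]
    have hI0 := I0_pos y
    have hI1 := I1_pos hy0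
    have hlt := I1_lt hy0
    have h2 : 2 * besselI 0 y * besselI 1 y / y < besselI 0 y ^ 2 := by
      rw [div_lt_iff₀ hy0]
      nlinarith
    nlinarith [sq_nonneg (besselI 1 y)]
  have := hmono (Set.self_mem_Ici) (Set.mem_Ici.mpr hx.le) hx
  rwa [hfun_zero] at this

private lemma g_anti : StrictAntiOn (fun x : ℝ => besselI 1 x / (x * besselI 0 x)) (Set.Ioi 0) := by
  apply strictAntiOn_of_deriv_neg (convex_Ioi 0)
  · intro y hy
    have hy0 : (0:ℝ) < y := hy
    have hden : y * besselI 0 y ≠ 0 := (mul_pos hy0 (I0_pos y)).ne'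
    exact ((hasDerivAt_I1 hy0.ne').div ((hasDerivAt_id y).mul (hasDerivAt_I0 y))
      hden).continuousAt.continuousWithinAt
  · intro y hy
    rw [interior_Ioi] at hy
    have hy0 : (0:ℝ) < y := hy
    have hI0 := I0_pos y
    have hden : y * besselI 0 y ≠ 0 := (mul_pos hy0 hI0).ne'
    have hd := (hasDerivAt_I1 hy0.ne').div ((hasDerivAt_id y).mul (hasDerivAt_I0 y)) hden
    simp only [id_eq] at hd
    rw [show (fun x => besselI 1 x / (x * besselI 0 x)) = besselI 1 / (id * besselI 0) from rfl, hd.deriv]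
    simp only [Pi.mul_apply, id_eq]
    apply div_neg_of_neg_of_pos
    · have hnum : (besselI 0 y - besselI 1 y / y) * (y * besselI 0 y)
          - besselI 1 y * (1 * besselI 0 y + y * besselI 1 y) = -(hfun y) := by
        unfold hfun
        field_simp
        ring
      rw [hnum]
      exact neg_neg_of_pos (hfun_pos hy0)
    · exact pow_pos (mul_pos hy0 hI0) 2

theorem F_strictMono (r : ℝ) (hr : 0 < r) :
    StrictMonoOn (fun η : ℝ => η * besselI 1 (r / η) / besselI 0 (r / η)) (Set.Ioi 0) := by
  have key : ∀ η : ℝ, 0 < η →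
      η * besselI 1 (r / η) / besselI 0 (r / η)
        = r * (besselI 1 (r / η) / (r / η * besselI 0 (r / η))) := by
    intro η hη
    have hI0 : besselI 0 (r / η) ≠ 0 := (I0_pos _).ne'
    have hrη : r / η ≠ 0 := (div_pos hr hη).ne'
    field_simp
  intro a ha b hb hab
  simp only [Set.mem_Ioi] at ha hb
  have hma : r / a ∈ Set.Ioi (0:ℝ) := Set.mem_Ioi.mpr (div_pos hr ha)
  have hmb : r / b ∈ Set.Ioi (0:ℝ) := Set.mem_Ioi.mpr (div_pos hr hb)
  have hlt : r / b < r / a := div_lt_div_of_pos_left hr ha hab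
  have hg := g_anti hmb hma hlt
  simp only
  rw [key a ha, key b hb]
  exact mul_lt_mul_of_pos_left hg hr
end

section
/- Fix r > 0. If σ_1, σ_2 > 0 satisfy sqrt(σ_1) · I_1(r/sqrt(σ_1)) / I_0(r/sqrt(σ_1)) = sqrt(σ_2) · I_1(r/sqrt(σ_2)) / I_0(r/sqrt(σ_2)), then σ_1 = σ_2. -/
open Real

namespace BesselAux

noncomputable def f0 (x : ℝ) (k : ℕ) : ℝ :=
  (x / 2) ^ (2 * k) / ((Nat.factorial k : ℝ) * (Nat.factorial k : ℝ))

noncomputable def f1 (x : ℝ) (k : ℕ) : ℝ :=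
  (x / 2) ^ (2 * k + 1) / ((Nat.factorial k : ℝ) * (Nat.factorial (k + 1) : ℝ))

lemma besselI0_eq (x : ℝ) : besselI 0 x = ∑' k, f0 x k := by
  simp [besselI, f0]

lemma besselI1_eq (x : ℝ) : besselI 1 x = ∑' k, f1 x k := by
  simp [besselI, f1]

lemma summable_norm_f0 (x : ℝ) : Summable fun k => ‖f0 x k‖ := by
  refine Summable.of_nonneg_of_le (fun k => norm_nonneg _) ?_
    (Real.summable_pow_div_factorial ((x / 2) ^ 2))
  · intro k
    have h1 : f0 x k = ((x / 2) ^ 2) ^ k / ((Nat.factorial k : ℝ) * (Nat.factorial k : ℝ)) := by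
      rw [f0, pow_mul]
    have hnn : (0:ℝ) ≤ ((x / 2) ^ 2) ^ k / ((Nat.factorial k : ℝ) * (Nat.factorial k : ℝ)) := by
      positivity
    rw [h1, Real.norm_eq_abs, abs_of_nonneg hnn]
    gcongr
    exact le_mul_of_one_le_left (by positivity) (by exact_mod_cast (Nat.factorial_pos k))

lemma summable_norm_f1 (x : ℝ) : Summable fun k => ‖f1 x k‖ := by
  refine Summable.of_nonneg_of_le (fun k => norm_nonneg _) ?_
    ((Real.summable_pow_div_factorial ((x / 2) ^ 2)).mul_left |x / 2|)
  · intro k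
    have h1 : |f1 x k| = |x / 2| ^ (2 * k + 1) / ((Nat.factorial k : ℝ) * (Nat.factorial (k + 1) : ℝ)) := by
      rw [f1, abs_div, abs_pow,
        abs_of_nonneg (show (0:ℝ) ≤ (Nat.factorial k : ℝ) * (Nat.factorial (k + 1) : ℝ) from by positivity)]
    rw [Real.norm_eq_abs, h1]
    have h2 : |x / 2| ^ (2 * k + 1) = |x / 2| * ((x / 2) ^ 2) ^ k := by
      rw [pow_succ']
      congr 1
      rw [pow_mul, sq_abs]
    rw [h2, mul_div_assoc]
    gcongr
    exact le_mul_of_one_le_right (by positivity)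
        (by exact_mod_cast (Nat.factorial_pos (k + 1)))

lemma summable_f0 (x : ℝ) : Summable (f0 x) := (summable_norm_f0 x).of_norm

lemma summable_f1 (x : ℝ) : Summable (f1 x) := (summable_norm_f1 x).of_norm

lemma f0_nonneg (x : ℝ) (k : ℕ) : 0 ≤ f0 x k := by
  rw [f0, pow_mul]
  positivity

lemma besselI0_pos (x : ℝ) : 0 < besselI 0 x := by
  rw [besselI0_eq]
  refine Summable.tsum_pos (summable_f0 x) (f0_nonneg x) 0 ?_
  simp [f0]

/-- The summand of the double series for `y * I₀(y) * I₁(x) - x * I₀(x) * I₁(y)`. -/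
noncomputable def F (x y : ℝ) (p : ℕ × ℕ) : ℝ :=
  y * (f0 y p.1 * f1 x p.2) - x * (f0 x p.1 * f1 y p.2)

lemma summable_prod (x y : ℝ) : Summable fun p : ℕ × ℕ => f0 y p.1 * f1 x p.2 :=
  summable_mul_of_summable_norm (summable_norm_f0 y) (summable_norm_f1 x)

lemma summable_F (x y : ℝ) : Summable (F x y) :=
  ((summable_prod x y).mul_left y).sub ((summable_prod y x).mul_left x)

lemma prod_eq (x y : ℝ) :
    y * besselI 0 y * besselI 1 x = ∑' p : ℕ × ℕ, y * (f0 y p.1 * f1 x p.2) := by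
  rw [besselI0_eq, besselI1_eq, mul_assoc,
    tsum_mul_tsum_of_summable_norm (summable_norm_f0 y) (summable_norm_f1 x), tsum_mul_left]

lemma tsum_F_eq (x y : ℝ) :
    ∑' p, F x y p = y * besselI 0 y * besselI 1 x - x * besselI 0 x * besselI 1 y := by
  rw [prod_eq x y, prod_eq y x]
  exact Summable.tsum_sub ((summable_prod x y).mul_left y) ((summable_prod y x).mul_left x)

lemma F_add_swap (x y : ℝ) (i j : ℕ) :
    F x y (i, j) + F x y (j, i) =
      (y ^ (2 * i + 1) * x ^ (2 * j + 1) - x ^ (2 * i + 1) * y ^ (2 * j + 1)) *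
        (1 / ((Nat.factorial i : ℝ) * (Nat.factorial i) * ((Nat.factorial j) * (Nat.factorial (j + 1))))
          - 1 / ((Nat.factorial j : ℝ) * (Nat.factorial j) * ((Nat.factorial i) * (Nat.factorial (i + 1)))))
        / 2 ^ (2 * i + 2 * j + 1) := by
  have hi : (Nat.factorial i : ℝ) ≠ 0 := by exact_mod_cast (Nat.factorial_pos i).ne'
  have hj : (Nat.factorial j : ℝ) ≠ 0 := by exact_mod_cast (Nat.factorial_pos j).ne'
  have hi1 : (Nat.factorial (i + 1) : ℝ) ≠ 0 := by exact_mod_cast (Nat.factorial_pos (i + 1)).ne'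
  have hj1 : (Nat.factorial (j + 1) : ℝ) ≠ 0 := by exact_mod_cast (Nat.factorial_pos (j + 1)).ne'
  simp only [F, f0, f1, div_pow]
  field_simp
  ring

lemma fact_ineq (i j : ℕ) (hji : j ≤ i) :
    (Nat.factorial i) * (Nat.factorial i) * ((Nat.factorial j) * (Nat.factorial (j + 1)))
      ≤ (Nat.factorial j) * (Nat.factorial j) * ((Nat.factorial i) * (Nat.factorial (i + 1))) := by
  rw [Nat.factorial_succ, Nat.factorial_succ]
  have h : j + 1 ≤ i + 1 := by omega
  calc Nat.factorial i * Nat.factorial i * (Nat.factorial j * ((j + 1) * Nat.factorial j))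
      = (j + 1) * (Nat.factorial i * Nat.factorial i * (Nat.factorial j * Nat.factorial j)) := by ring
    _ ≤ (i + 1) * (Nat.factorial i * Nat.factorial i * (Nat.factorial j * Nat.factorial j)) :=
        Nat.mul_le_mul_right _ h
    _ = Nat.factorial j * Nat.factorial j * (Nat.factorial i * ((i + 1) * Nat.factorial i)) := by ring

lemma term_nonneg' (x y : ℝ) (hx : 0 < x) (hxy : x ≤ y) (i j : ℕ) (hji : j ≤ i) :
    0 ≤ F x y (i, j) + F x y (j, i) := by
  have hy : 0 < y := lt_of_lt_of_le hx hxy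
  rw [F_add_swap]
  apply div_nonneg _ (by positivity)
  apply mul_nonneg
  · -- y^(2i+1) x^(2j+1) - x^(2i+1) y^(2j+1) ≥ 0 when j ≤ i
    obtain ⟨m, rfl⟩ := Nat.exists_eq_add_of_le hji
    have h1 : x ^ (2 * m) ≤ y ^ (2 * m) := pow_le_pow_left₀ hx.le hxy _
    have e1 : y ^ (2 * (j + m) + 1) * x ^ (2 * j + 1)
        = (y ^ (2 * j + 1) * x ^ (2 * j + 1)) * y ^ (2 * m) := by ring
    have e2 : x ^ (2 * (j + m) + 1) * y ^ (2 * j + 1)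
        = (y ^ (2 * j + 1) * x ^ (2 * j + 1)) * x ^ (2 * m) := by ring
    rw [e1, e2, sub_nonneg]
    exact mul_le_mul_of_nonneg_left h1 (by positivity)
  · -- the factorial factor
    rw [sub_nonneg]
    have h1 := fact_ineq i j hji
    have h1' : ((Nat.factorial i : ℝ) * (Nat.factorial i) * ((Nat.factorial j) * (Nat.factorial (j + 1))))
        ≤ ((Nat.factorial j : ℝ) * (Nat.factorial j) * ((Nat.factorial i) * (Nat.factorial (i + 1)))) := by
      exact_mod_cast h1
    apply one_div_le_one_div_of_le (by positivity) h1'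

lemma term_nonneg (x y : ℝ) (hx : 0 < x) (hxy : x ≤ y) (p : ℕ × ℕ) :
    0 ≤ F x y p + F x y p.swap := by
  obtain ⟨i, j⟩ := p
  rcases le_total j i with h | h
  · exact term_nonneg' x y hx hxy i j h
  · rw [add_comm]
    exact term_nonneg' x y hx hxy j i h

lemma term_pos (x y : ℝ) (hx : 0 < x) (hxy : x < y) :
    0 < F x y (1, 0) + F x y ((1, 0) : ℕ × ℕ).swap := by
  have hy : 0 < y := hx.trans hxy
  have : ((1, 0) : ℕ × ℕ).swap = (0, 1) := rfl
  rw [this, F_add_swap]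
  norm_num
  nlinarith [mul_pos (mul_pos hx hy) (mul_pos (sub_pos.2 hxy) (add_pos hx hy)),
    mul_pos hx hy, sq_nonneg (x + y), sq_nonneg (x - y)]

/-- The key inequality: for `0 < x < y`, `x I₀(x) I₁(y) < y I₀(y) I₁(x)`. -/
lemma key (x y : ℝ) (hx : 0 < x) (hxy : x < y) :
    x * besselI 0 x * besselI 1 y < y * besselI 0 y * besselI 1 x := by
  have hF : Summable (F x y) := summable_F x y
  have hFs : Summable (fun p : ℕ × ℕ => F x y p.swap) :=
    ((Equiv.prodComm ℕ ℕ).summable_iff).2 hF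
  have hswap : ∑' p : ℕ × ℕ, F x y p.swap = ∑' p, F x y p :=
    (Equiv.prodComm ℕ ℕ).tsum_eq (F x y)
  have hpos : 0 < ∑' p : ℕ × ℕ, (F x y p + F x y p.swap) :=
    Summable.tsum_pos (hF.add hFs) (term_nonneg x y hx hxy.le) (1, 0) (term_pos x y hx hxy)
  rw [Summable.tsum_add hF hFs, hswap] at hpos
  have h2 : 0 < ∑' p, F x y p := by linarith
  rw [tsum_F_eq] at h2
  linarith

/-- Strict monotonicity of `s ↦ s I₁(r/s) / I₀(r/s)`. -/
lemma mono (r : ℝ) (hr : 0 < r) (s t : ℝ) (hs : 0 < s) (hst : s < t) :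
    s * besselI 1 (r / s) / besselI 0 (r / s) < t * besselI 1 (r / t) / besselI 0 (r / t) := by
  have ht : 0 < t := hs.trans hst
  set x := r / t with hxdef
  set y := r / s with hydef
  have hx : 0 < x := div_pos hr ht
  have hy : 0 < y := div_pos hr hs
  have hxy : x < y := by
    rw [hxdef, hydef]
    exact div_lt_div_of_pos_left hr hs hst
  have hk := key x y hx hxy
  have h0x := besselI0_pos x
  have h0y := besselI0_pos y
  rw [div_lt_div_iff₀ h0y h0x]
  have h' := mul_lt_mul_of_pos_right hk (div_pos (mul_pos hs ht) hr)
  calc s * besselI 1 y * besselI 0 x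
      = x * besselI 0 x * besselI 1 y * (s * t / r) := by
        rw [hxdef]; field_simp
    _ < y * besselI 0 y * besselI 1 x * (s * t / r) := h'
    _ = t * besselI 1 x * besselI 0 y := by
        rw [hydef]; field_simp

end BesselAux

theorem uniqueness_key (r : ℝ) (hr : 0 < r) (σ₁ σ₂ : ℝ) (h₁ : 0 < σ₁) (h₂ : 0 < σ₂)
    (h : Real.sqrt σ₁ * besselI 1 (r / Real.sqrt σ₁) / besselI 0 (r / Real.sqrt σ₁)
       = Real.sqrt σ₂ * besselI 1 (r / Real.sqrt σ₂) / besselI 0 (r / Real.sqrt σ₂)) :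
    σ₁ = σ₂ := by
  have hs1 : 0 < Real.sqrt σ₁ := Real.sqrt_pos.2 h₁
  have hs2 : 0 < Real.sqrt σ₂ := Real.sqrt_pos.2 h₂
  rcases lt_trichotomy σ₁ σ₂ with hlt | heq | hgt
  · have : Real.sqrt σ₁ < Real.sqrt σ₂ := Real.sqrt_lt_sqrt h₁.le hlt
    exact absurd h (ne_of_lt (BesselAux.mono r hr _ _ hs1 this))
  · exact heq
  · have : Real.sqrt σ₂ < Real.sqrt σ₁ := Real.sqrt_lt_sqrt h₂.le hgt
    exact absurd h.symm (ne_of_lt (BesselAux.mono r hr _ _ hs2 this))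
end

section
/- Define D(x,y) = I_0(x)K_0(y) − K_0(x)I_0(y) and its partial derivatives D_{r,s} as in the context. Then for all x, y, z > 0, D_{1,1}(x,y)·D_{0,1}(x,z) − D_{0,1}(x,y)·D_{1,1}(x,z) = −x^{-1} · D_{1,1}(z,y). -/
open Real

section WronskianProof

open Set MeasureTheory Filter Topology

noncomputable def cI (k : ℕ) : ℝ := ((4:ℝ) ^ k * (Nat.factorial k : ℝ)^2)⁻¹

lemma cI_pos (k : ℕ) : 0 < cI k := by
  unfold cI
  positivity

lemma besselI_zero_eq (x : ℝ) :
    (∑' k : ℕ, (x / 2) ^ (2 * k + 0) / ((Nat.factorial k : ℝ) * (Nat.factorial (k + 0) : ℝ)))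
      = ∑' k, cI k * x ^ (2*k) := by
  congr 1 with k
  have h4 : ((2:ℝ))^(2*k) = 4^k := by rw [pow_mul]; norm_num
  have hk : (0:ℝ) < (Nat.factorial k : ℝ) := by positivity
  rw [add_zero, add_zero, div_pow, h4]
  unfold cI
  field_simp

lemma cI_succ_mul (k : ℕ) : cI (k+1) * (2*(k+1):ℝ)^2 = cI k := by
  unfold cI
  have hk : (0:ℝ) < (Nat.factorial k : ℝ) := by positivity
  rw [Nat.factorial_succ]
  push_cast
  field_simp
  ring

lemma cI_le (k : ℕ) : cI k ≤ ((4:ℝ)^k * (Nat.factorial k : ℝ))⁻¹ := by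
  have hf : (1:ℝ) ≤ (Nat.factorial k : ℝ) := by exact_mod_cast Nat.one_le_iff_ne_zero.mpr (Nat.factorial_pos k).ne'
  unfold cI
  apply inv_anti₀ (by positivity)
  have h4 : (0:ℝ) < 4^k := by positivity
  have h : (Nat.factorial k:ℝ) ≤ (Nat.factorial k:ℝ)^2 := by nlinarith
  nlinarith

lemma cIbound {x R : ℝ} (hR : 1 ≤ R) (hx : |x| ≤ R) {k j : ℕ} (hj : j ≤ 2*k) {m C : ℝ}
    (hm : 0 ≤ m) (hmC : m ≤ C * 4^k) :
    cI k * (m * |x|^j) ≤ C * ((R^2)^k / (Nat.factorial k : ℝ)) := by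
  have hf : (0:ℝ) < (Nat.factorial k : ℝ) := by positivity
  have h1 : |x|^j ≤ R^(2*k) := by
    calc |x|^j ≤ R^j := pow_le_pow_left₀ (abs_nonneg x) hx j
    _ ≤ R^(2*k) := pow_le_pow_right₀ hR hj
  calc cI k * (m * |x|^j) ≤ ((4:ℝ)^k * (Nat.factorial k : ℝ))⁻¹ * ((C * 4^k) * R^(2*k)) := by
        have hC4 : (0:ℝ) ≤ C * 4^k := hm.trans hmC
        apply mul_le_mul (cI_le k) (mul_le_mul hmC h1 (pow_nonneg (abs_nonneg x) j) hC4)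
          (mul_nonneg hm (pow_nonneg (abs_nonneg x) j)) (by positivity)
  _ = C * ((R^2)^k / (Nat.factorial k : ℝ)) := by
        rw [← pow_mul]
        field_simp

noncomputable def Ia (x : ℝ) : ℝ := ∑' k, cI k * x^(2*k)
noncomputable def Ib (x : ℝ) : ℝ := ∑' k, cI k * (((2*k : ℕ):ℝ) * x^(2*k-1))
noncomputable def Ic (x : ℝ) : ℝ :=
  ∑' k, cI k * (((2*k : ℕ):ℝ) * (((2*k-1 : ℕ):ℝ) * x^(2*k-2)))

lemma k_le_pow (k : ℕ) : (k:ℝ) ≤ 2^k := by exact_mod_cast (Nat.lt_two_pow_self (n := k)).le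

lemma four_pow_eq (k : ℕ) : (4:ℝ)^k = 2^k * 2^k := by rw [← mul_pow]; norm_num

lemma normb0 {x R : ℝ} (hR : 1 ≤ R) (hx : |x| ≤ R) (k : ℕ) :
    ‖cI k * x ^ (2*k)‖ ≤ 1 * ((R^2)^k / (Nat.factorial k : ℝ)) := by
  have h : ‖cI k * x ^ (2*k)‖ = cI k * (1 * |x|^(2*k)) := by
    rw [norm_mul, norm_pow, Real.norm_eq_abs, Real.norm_eq_abs, abs_of_pos (cI_pos k), one_mul]
  rw [h]
  exact cIbound hR hx le_rfl zero_le_one (by simpa using one_le_pow₀ (by norm_num : (1:ℝ) ≤ 4))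

lemma normb1 {x R : ℝ} (hR : 1 ≤ R) (hx : |x| ≤ R) (k : ℕ) :
    ‖cI k * (((2*k : ℕ):ℝ) * x^(2*k-1))‖ ≤ 2 * ((R^2)^k / (Nat.factorial k : ℝ)) := by
  have h : ‖cI k * (((2*k : ℕ):ℝ) * x^(2*k-1))‖
      = cI k * (((2*k : ℕ):ℝ) * |x|^(2*k-1)) := by
    rw [norm_mul, norm_mul, norm_pow, Real.norm_eq_abs, Real.norm_eq_abs, Real.norm_eq_abs,
      abs_of_pos (cI_pos k), Nat.abs_cast]
  rw [h]
  refine cIbound hR hx (Nat.sub_le _ _) (by positivity) ?_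
  have h2 : (2:ℝ)^k ≤ 4^k := pow_le_pow_left₀ (by norm_num) (by norm_num) k
  have := k_le_pow k
  push_cast
  nlinarith
  
lemma normb2 {x R : ℝ} (hR : 1 ≤ R) (hx : |x| ≤ R) (k : ℕ) :
    ‖cI k * (((2*k : ℕ):ℝ) * (((2*k-1 : ℕ):ℝ) * x^(2*k-2)))‖
      ≤ 4 * ((R^2)^k / (Nat.factorial k : ℝ)) := by
  have h : ‖cI k * (((2*k : ℕ):ℝ) * (((2*k-1 : ℕ):ℝ) * x^(2*k-2)))‖
      = cI k * ((((2*k : ℕ):ℝ) * ((2*k-1 : ℕ):ℝ)) * |x|^(2*k-2)) := by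
    rw [norm_mul, norm_mul, norm_mul, norm_pow]
    simp [Real.norm_eq_abs, abs_of_pos (cI_pos k), Nat.abs_cast]
    ring_nf
    tauto
  rw [h]
  refine cIbound hR hx (by omega) (by positivity) ?_
  have ha : ((2*k : ℕ):ℝ) ≤ 2 * 2^k := by have := k_le_pow k; push_cast; linarith
  have hb : ((2*k-1 : ℕ):ℝ) ≤ 2 * 2^k := by
    have h1 : ((2*k-1 : ℕ):ℝ) ≤ ((2*k : ℕ):ℝ) := by exact_mod_cast Nat.sub_le _ _
    linarith
  have h2 : (0:ℝ) ≤ 2^k := by positivity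
  rw [four_pow_eq]
  nlinarith

lemma summable_u (C R : ℝ) : Summable (fun k : ℕ => C * ((R^2)^k / (Nat.factorial k : ℝ))) :=
  (Real.summable_pow_div_factorial (R^2)).mul_left C

lemma hasDerivAt_Ia (x : ℝ) : HasDerivAt Ia (Ib x) x := by
  set R : ℝ := |x| + 1 with hRdef
  have hR : 1 ≤ R := by have := abs_nonneg x; linarith
  have hxR : x ∈ Metric.ball (0:ℝ) R := by
    simp [Metric.mem_ball, Real.dist_eq, hRdef]
  have h0R : (0:ℝ) ∈ Metric.ball (0:ℝ) R := Metric.mem_ball_self (by linarith)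
  unfold Ia Ib
  refine hasDerivAt_tsum_of_isPreconnected
    (g := fun k z => cI k * z^(2*k))
    (g' := fun k z => cI k * (((2*k : ℕ):ℝ) * z^(2*k-1))) (summable_u 2 R) Metric.isOpen_ball
    (convex_ball _ _).isPreconnected (fun k y _ => ?_) (fun k y hy => ?_) h0R ?_ hxR
  · exact (hasDerivAt_pow (2*k) y).const_mul (cI k)
  · have hy' : |y| ≤ R := by
      rw [Metric.mem_ball, Real.dist_eq, sub_zero] at hy; linarith
    exact normb1 hR hy' k
  · apply Summable.of_norm_bounded (summable_u 1 R)
    intro k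
    exact normb0 hR (by simp; linarith) k

lemma hasDerivAt_Ib (x : ℝ) : HasDerivAt Ib (Ic x) x := by
  set R : ℝ := |x| + 1 with hRdef
  have hR : 1 ≤ R := by have := abs_nonneg x; linarith
  have hxR : x ∈ Metric.ball (0:ℝ) R := by
    simp [Metric.mem_ball, Real.dist_eq, hRdef]
  have h0R : (0:ℝ) ∈ Metric.ball (0:ℝ) R := Metric.mem_ball_self (by linarith)
  unfold Ib Ic
  refine hasDerivAt_tsum_of_isPreconnected
    (g := fun k z => cI k * (((2*k : ℕ):ℝ) * z^(2*k-1)))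
    (g' := fun k z => cI k * (((2*k : ℕ):ℝ) * (((2*k-1 : ℕ):ℝ) * z^(2*k-2)))) (summable_u 4 R) Metric.isOpen_ball
    (convex_ball _ _).isPreconnected (fun k y _ => ?_) (fun k y hy => ?_) h0R ?_ hxR
  · have h := ((hasDerivAt_pow (2*k-1) y).const_mul ((2*k : ℕ):ℝ)).const_mul (cI k)
    have he : 2*k-1-1 = 2*k-2 := by omega
    rw [he] at h
    exact h
  · have hy' : |y| ≤ R := by
      rw [Metric.mem_ball, Real.dist_eq, sub_zero] at hy; linarith
    exact normb2 hR hy' k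
  · apply Summable.of_norm_bounded (summable_u 2 R)
    intro k
    exact normb1 hR (by simp; linarith) k

lemma summable_Ia (x : ℝ) : Summable (fun k => cI k * x^(2*k)) :=
  Summable.of_norm_bounded (summable_u 1 (|x|+1))
    (fun k => normb0 (by linarith [abs_nonneg x]) (by linarith) k)

lemma summable_Ib (x : ℝ) : Summable (fun k => cI k * (((2*k : ℕ):ℝ) * x^(2*k-1))) :=
  Summable.of_norm_bounded (summable_u 2 (|x|+1))
    (fun k => normb1 (by linarith [abs_nonneg x]) (by linarith) k)

lemma summable_Ic (x : ℝ) :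
    Summable (fun k => cI k * (((2*k : ℕ):ℝ) * (((2*k-1 : ℕ):ℝ) * x^(2*k-2)))) :=
  Summable.of_norm_bounded (summable_u 4 (|x|+1))
    (fun k => normb2 (by linarith [abs_nonneg x]) (by linarith) k)

lemma I_ODE (x : ℝ) : x * Ic x + Ib x = x * Ia x := by
  have sa := summable_Ia x
  have sb := summable_Ib x
  have sc := summable_Ic x
  have claim1 : ∀ k : ℕ, x * (cI k * (((2*k : ℕ):ℝ) * (((2*k-1 : ℕ):ℝ) * x^(2*k-2))))
      + cI k * (((2*k : ℕ):ℝ) * x^(2*k-1)) = cI k * ((2*k : ℕ):ℝ)^2 * x^(2*k-1) := by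
    intro k
    cases k with
    | zero => simp
    | succ k =>
      have e1 : 2*(k+1)-2 = 2*k := by omega
      have e2 : 2*(k+1)-1 = 2*k+1 := by omega
      rw [e1, e2]
      push_cast
      ring
  have claim2 : ∀ k : ℕ, cI (k+1) * ((2*(k+1) : ℕ):ℝ)^2 * x^(2*(k+1)-1)
      = x * (cI k * x^(2*k)) := by
    intro k
    have e2 : 2*(k+1)-1 = 2*k+1 := by omega
    rw [e2]
    have h := cI_succ_mul k
    push_cast
    push_cast at h
    linear_combination x^(2*k+1) * h
  have hB : Summable (fun k => cI k * ((2*k : ℕ):ℝ)^2 * x^(2*k-1)) :=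
    ((sc.mul_left x).add sb).congr claim1
  unfold Ia Ib Ic
  rw [← tsum_mul_left, ← tsum_mul_left, ← Summable.tsum_add (sc.mul_left x) sb,
    tsum_congr claim1, Summable.tsum_eq_zero_add hB]
  simp only [Nat.mul_zero, Nat.cast_zero]
  rw [tsum_congr claim2]
  simp

noncomputable def Ka (x : ℝ) : ℝ := ∫ t in Ioi (0:ℝ), exp (-(x * cosh t))
noncomputable def Kb (x : ℝ) : ℝ := ∫ t in Ioi (0:ℝ), -(cosh t * exp (-(x * cosh t)))
noncomputable def Kc (x : ℝ) : ℝ := ∫ t in Ioi (0:ℝ), cosh t ^ 2 * exp (-(x * cosh t))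

lemma pow_le_exp_mul {u : ℝ} (hu : 0 ≤ u) (n : ℕ) : u^n ≤ (Nat.factorial n : ℝ) * exp u := by
  have h1 : u^n / (Nat.factorial n : ℝ) ≤ ∑ i ∈ Finset.range (n+1), u^i / (Nat.factorial i : ℝ) := by
    apply Finset.single_le_sum (f := fun i => u^i / (Nat.factorial i : ℝ))
    · intro i _; positivity
    · exact Finset.self_mem_range_succ n
  have h2 := Real.sum_le_exp_of_nonneg hu (n+1)
  have hf : (0:ℝ) < (Nat.factorial n : ℝ) := by positivity
  rw [div_le_iff₀ hf] at h1
  nlinarith [h1, h2, Real.exp_pos u]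

lemma half_exp_le_cosh (t : ℝ) : exp t / 2 ≤ cosh t := by
  rw [Real.cosh_eq]; linarith [Real.exp_pos (-t)]

lemma cosh_bound {a : ℝ} (ha : 0 < a) (n : ℕ) {t : ℝ} (ht : 0 ≤ t) :
    cosh t ^ n * exp (-(a * cosh t)) ≤ ((Nat.factorial n : ℝ) * (2/a)^n) * exp (-(a/4) * t) := by
  have hc1 : 1 ≤ cosh t := Real.one_le_cosh t
  have hlin : (1 + t)/2 ≤ cosh t := by
    have h1 := Real.add_one_le_exp t
    have h2 := half_exp_le_cosh t
    linarith
  have h2 : cosh t ^ n * exp (-(a/2 * cosh t)) ≤ (Nat.factorial n : ℝ) * (2/a)^n := by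
    have hexp := Real.exp_pos ((a/2) * cosh t)
    have h1 : ((a/2) * cosh t)^n ≤ (Nat.factorial n : ℝ) * exp ((a/2) * cosh t) :=
      pow_le_exp_mul (by positivity) n
    rw [mul_pow] at h1
    rw [Real.exp_neg, ← div_eq_mul_inv, div_le_iff₀ hexp]
    have hid : (2/a)^n * ((a/2)^n * cosh t^n) = cosh t ^ n := by
      rw [← mul_assoc, ← mul_pow]
      field_simp
      exact one_pow n
    calc cosh t^n = (2/a)^n * ((a/2)^n * cosh t^n) := hid.symm
      _ ≤ (2/a)^n * ((Nat.factorial n : ℝ) * exp ((a/2)*cosh t)) :=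
          mul_le_mul_of_nonneg_left h1 (by positivity)
      _ = (Nat.factorial n : ℝ) * (2/a)^n * exp ((a/2) * cosh t) := by ring
  have h3 : exp (-(a/2 * cosh t)) ≤ exp (-(a/4) * t) := by
    apply Real.exp_le_exp.2
    nlinarith
  calc cosh t^n * exp (-(a*cosh t))
      = (cosh t^n * exp (-(a/2*cosh t))) * exp (-(a/2 * cosh t)) := by
        rw [mul_assoc, ← Real.exp_add]; ring_nf
    _ ≤ ((Nat.factorial n : ℝ) * (2/a)^n) * exp (-(a/4)*t) :=
        mul_le_mul h2 h3 (Real.exp_pos _).le (by positivity)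

lemma integrableOn_coshpow {a : ℝ} (ha : 0 < a) (n : ℕ) :
    IntegrableOn (fun t => cosh t ^ n * exp (-(a * cosh t))) (Ioi (0:ℝ)) := by
  have hint : IntegrableOn (fun t => ((Nat.factorial n : ℝ) * (2/a)^n) * exp (-(a/4) * t))
      (Ioi (0:ℝ)) := (exp_neg_integrableOn_Ioi 0 (by positivity)).const_mul _
  apply Integrable.mono' hint
  · apply Continuous.aestronglyMeasurable
    fun_prop
  · filter_upwards [ae_restrict_mem measurableSet_Ioi] with t ht
    rw [Real.norm_eq_abs, abs_of_nonneg (by positivity)]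
    exact cosh_bound ha n (le_of_lt ht)

lemma int0 {x : ℝ} (hx : 0 < x) : IntegrableOn (fun t => exp (-(x * cosh t))) (Ioi (0:ℝ)) := by
  simpa using integrableOn_coshpow hx 0

lemma int1 {x : ℝ} (hx : 0 < x) :
    IntegrableOn (fun t => cosh t * exp (-(x * cosh t))) (Ioi (0:ℝ)) := by
  simpa [pow_one] using integrableOn_coshpow hx 1

lemma ball_lower {x y : ℝ} (hx : 0 < x) (hy : y ∈ Metric.ball x (x/2)) : x/2 ≤ y := by
  rw [Metric.mem_ball, Real.dist_eq, abs_lt] at hy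
  linarith [hy.1]

lemma hasDerivAt_Ka {x : ℝ} (hx : 0 < x) : HasDerivAt Ka (Kb x) x := by
  unfold Ka Kb
  have key := hasDerivAt_integral_of_dominated_loc_of_deriv_le
    (F := fun y t => exp (-(y * cosh t)))
    (F' := fun y t => -(cosh t * exp (-(y * cosh t))))
    (bound := fun t => cosh t * exp (-(x/2 * cosh t)))
    (μ := volume.restrict (Ioi (0:ℝ))) (x₀ := x)
    (Metric.ball_mem_nhds x (half_pos hx))
    (Filter.Eventually.of_forall fun y => Continuous.aestronglyMeasurable (by fun_prop))
    (int0 hx)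
    (Continuous.aestronglyMeasurable (by fun_prop))
    (ae_of_all _ fun t y hy => ?_)
    (int1 (half_pos hx))
    (ae_of_all _ fun t y hy => ?_)
  · exact key.2
  · rw [Real.norm_eq_abs, abs_neg, abs_of_nonneg (by positivity)]
    have hc := Real.cosh_pos t
    have hle : x/2 * cosh t ≤ y * cosh t :=
      mul_le_mul_of_nonneg_right (ball_lower hx hy) hc.le
    have := Real.exp_le_exp.2 (neg_le_neg hle)
    nlinarith [Real.exp_pos (-(y * cosh t))]
  · have h := (((hasDerivAt_mul_const (cosh t)).neg).exp (x := y))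
    refine h.congr_deriv (Eq.symm ?_)
    simp only [Pi.neg_apply]
    ring

lemma hasDerivAt_Kb {x : ℝ} (hx : 0 < x) : HasDerivAt Kb (Kc x) x := by
  unfold Kb Kc
  have key := hasDerivAt_integral_of_dominated_loc_of_deriv_le
    (F := fun y t => -(cosh t * exp (-(y * cosh t))))
    (F' := fun y t => cosh t ^ 2 * exp (-(y * cosh t)))
    (bound := fun t => cosh t ^ 2 * exp (-(x/2 * cosh t)))
    (μ := volume.restrict (Ioi (0:ℝ))) (x₀ := x)
    (Metric.ball_mem_nhds x (half_pos hx))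
    (Filter.Eventually.of_forall fun y => Continuous.aestronglyMeasurable (by fun_prop))
    ((int1 hx).neg)
    (Continuous.aestronglyMeasurable (by fun_prop))
    (ae_of_all _ fun t y hy => ?_)
    (integrableOn_coshpow (half_pos hx) 2)
    (ae_of_all _ fun t y hy => ?_)
  · exact key.2
  · rw [Real.norm_eq_abs, abs_of_nonneg (by positivity)]
    have hc := Real.cosh_pos t
    have hle : x/2 * cosh t ≤ y * cosh t :=
      mul_le_mul_of_nonneg_right (ball_lower hx hy) hc.le
    have := Real.exp_le_exp.2 (neg_le_neg hle)
    nlinarith [Real.exp_pos (-(y * cosh t)), sq_nonneg (cosh t)]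
  · have h := ((((hasDerivAt_mul_const (cosh t)).neg).exp (x := y)).const_mul (cosh t)).neg
    refine h.congr_deriv (Eq.symm ?_)
    simp only [Pi.neg_apply]
    ring

lemma tendsto_sinh_exp {x : ℝ} (hx : 0 < x) :
    Tendsto (fun t => -(sinh t * exp (-(x * cosh t)))) atTop (𝓝 0) := by
  rw [tendsto_zero_iff_norm_tendsto_zero]
  have hlim : Tendsto (fun t => ((Nat.factorial 1 : ℝ) * (2/x)^1) * exp (-(x/4) * t))
      atTop (𝓝 0) := by
    have h1 : Tendsto (fun t : ℝ => x/4 * t) atTop atTop :=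
      Tendsto.const_mul_atTop (by positivity) tendsto_id
    have h2 := Real.tendsto_exp_neg_atTop_nhds_zero.comp h1
    have h3 := h2.const_mul ((Nat.factorial 1 : ℝ) * (2/x)^1)
    simpa [Function.comp, mul_comm] using h3
  apply squeeze_zero' (Filter.Eventually.of_forall fun t => norm_nonneg _) _ hlim
  filter_upwards [eventually_ge_atTop (0:ℝ)] with t ht
  have hs : |sinh t| ≤ cosh t := by
    rw [abs_of_nonneg (Real.sinh_nonneg_iff.mpr ht)]
    exact (Real.sinh_lt_cosh t).le
  have hb := cosh_bound hx 1 ht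
  rw [pow_one] at hb
  have he := Real.exp_pos (-(x * cosh t))
  calc ‖-(sinh t * exp (-(x * cosh t)))‖ = |sinh t| * exp (-(x * cosh t)) := by
        rw [norm_neg, Real.norm_eq_abs, abs_mul, Real.abs_exp]
    _ ≤ cosh t * exp (-(x * cosh t)) := mul_le_mul_of_nonneg_right hs he.le
    _ ≤ ((Nat.factorial 1 : ℝ) * (2/x)^1) * exp (-(x/4) * t) := hb

lemma K_ODE {x : ℝ} (hx : 0 < x) : x * Kc x + Kb x = x * Ka x := by
  have i0 := int0 hx
  have i1 := int1 hx
  have i2 := integrableOn_coshpow hx 2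
  have hFderiv : ∀ t ∈ Ici (0:ℝ), HasDerivAt (fun t => -(sinh t * exp (-(x * cosh t))))
      (x * (cosh t^2 * exp (-(x * cosh t))) - cosh t * exp (-(x * cosh t))
        - x * exp (-(x * cosh t))) t := by
    intro t _
    have h := ((Real.hasDerivAt_sinh t).mul
      (((Real.hasDerivAt_cosh t).const_mul x).neg.exp)).neg
    refine h.congr_deriv (Eq.symm ?_)
    simp only [Pi.neg_apply]
    have hp := Real.cosh_sq t
    linear_combination (x * Real.exp (-(x * cosh t))) * hp
  have f'int : IntegrableOn (fun t => x * (cosh t^2 * exp (-(x * cosh t)))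
      - cosh t * exp (-(x * cosh t)) - x * exp (-(x * cosh t))) (Ioi (0:ℝ)) :=
    ((i2.const_mul x).sub i1).sub (i0.const_mul x)
  have key := integral_Ioi_of_hasDerivAt_of_tendsto' hFderiv f'int (tendsto_sinh_exp hx)
  simp only [Real.sinh_zero, zero_mul, neg_zero, sub_zero] at key
  have i12 : IntegrableOn (fun t => x * (cosh t^2 * exp (-(x * cosh t)))
      - cosh t * exp (-(x * cosh t))) (Ioi (0:ℝ)) := (i2.const_mul x).sub i1
  rw [integral_sub i12 (i0.const_mul x),
    integral_sub (i2.const_mul x) i1, integral_const_mul, integral_const_mul] at key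
  unfold Ka Kb Kc
  rw [integral_neg]
  linarith [key]

noncomputable def W (x : ℝ) : ℝ := x * (Ia x * Kb x - Ib x * Ka x)

lemma hasDerivAt_W {x : ℝ} (hx : 0 < x) : HasDerivAt W 0 x := by
  have h := (hasDerivAt_id x).mul
    (((hasDerivAt_Ia x).mul (hasDerivAt_Kb hx)).sub ((hasDerivAt_Ib x).mul (hasDerivAt_Ka hx)))
  have hI := I_ODE x
  have hK := K_ODE hx
  refine h.congr_deriv (Eq.symm ?_)
  simp only [id_eq, Pi.sub_apply, Pi.mul_apply]
  linear_combination Ka x * hI - Ia x * hK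

lemma W_const {x y : ℝ} (hx : 0 < x) (hy : 0 < y) : W x = W y := by
  have hdiff : ∀ z ∈ Ioi (0:ℝ), DifferentiableAt ℝ W z :=
    fun z hz => (hasDerivAt_W hz).differentiableAt
  have hbound : ∀ z ∈ Ioi (0:ℝ), ‖deriv W z‖ ≤ 0 :=
    fun z hz => by rw [(hasDerivAt_W hz).deriv]; simp
  have h0 := Convex.norm_image_sub_le_of_norm_deriv_le hdiff hbound (convex_Ioi 0) hx hy
  rw [zero_mul] at h0
  have := norm_le_zero_iff.mp h0
  linarith [sub_eq_zero.mp this]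

lemma tendsto_exp_cosh {x : ℝ} (hx : 0 < x) :
    Tendsto (fun t => -(exp (-(x * cosh t)))) atTop (𝓝 0) := by
  rw [tendsto_zero_iff_norm_tendsto_zero]
  have hlim : Tendsto (fun t => exp (-(x/4) * t)) atTop (𝓝 0) := by
    have h1 : Tendsto (fun t : ℝ => x/4 * t) atTop atTop :=
      Tendsto.const_mul_atTop (by positivity) tendsto_id
    have h2 := Real.tendsto_exp_neg_atTop_nhds_zero.comp h1
    exact h2.congr (fun t => by simp [Function.comp, neg_mul])
  apply squeeze_zero' (Filter.Eventually.of_forall fun t => norm_nonneg _) _ hlim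
  filter_upwards [eventually_ge_atTop (0:ℝ)] with t ht
  have hb := cosh_bound hx 0 ht
  calc ‖-(exp (-(x * cosh t)))‖ = exp (-(x * cosh t)) := by
        rw [norm_neg, Real.norm_eq_abs, Real.abs_exp]
    _ ≤ exp (-(x/4) * t) := by simpa using hb

lemma isinh {x : ℝ} (hx : 0 < x) :
    IntegrableOn (fun t => sinh t * exp (-(x * cosh t))) (Ioi (0:ℝ)) := by
  apply Integrable.mono' (int1 hx)
  · exact Continuous.aestronglyMeasurable (by fun_prop)
  · filter_upwards [ae_restrict_mem measurableSet_Ioi] with t ht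
    have hs : |sinh t| ≤ cosh t := by
      rw [abs_of_nonneg (Real.sinh_nonneg_iff.mpr (le_of_lt ht))]
      exact (Real.sinh_lt_cosh t).le
    rw [Real.norm_eq_abs, abs_mul, Real.abs_exp]
    exact mul_le_mul_of_nonneg_right hs (Real.exp_pos _).le

lemma int_sinh {x : ℝ} (hx : 0 < x) :
    ∫ t in Ioi (0:ℝ), sinh t * exp (-(x * cosh t)) = exp (-x) / x := by
  have hFderiv : ∀ t ∈ Ici (0:ℝ), HasDerivAt (fun t => -(exp (-(x * cosh t)) / x))
      (sinh t * exp (-(x * cosh t))) t := by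
    intro t _
    have h := (((((Real.hasDerivAt_cosh t).const_mul x).neg).exp).div_const x).neg
    refine h.congr_deriv (Eq.symm ?_)
    simp only [Pi.neg_apply]
    field_simp
  have htend : Tendsto (fun t => -(exp (-(x * cosh t)) / x)) atTop (𝓝 0) := by
    have := (tendsto_exp_cosh hx).div_const x
    simpa [neg_div] using this
  have key := integral_Ioi_of_hasDerivAt_of_tendsto' hFderiv (isinh hx) htend
  rw [key]
  simp [Real.cosh_zero]

lemma coshsub_int {x : ℝ} (hx : 0 < x) :
    IntegrableOn (fun t => (cosh t - sinh t) * exp (-(x * cosh t))) (Ioi (0:ℝ)) := by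
  have h : (fun t => (cosh t - sinh t) * exp (-(x * cosh t)))
      = (fun t : ℝ => cosh t * exp (-(x * cosh t)) - sinh t * exp (-(x * cosh t))) := by
    funext t; ring
  rw [h]
  exact (int1 hx).sub (isinh hx)

lemma J_bounds {x : ℝ} (hx : 0 < x) :
    0 ≤ ∫ t in Ioi (0:ℝ), (cosh t - sinh t) * exp (-(x * cosh t)) ∧
    (∫ t in Ioi (0:ℝ), (cosh t - sinh t) * exp (-(x * cosh t))) ≤ 1 := by
  constructor
  · apply setIntegral_nonneg measurableSet_Ioi
    intro t _
    have h1 := Real.sinh_lt_cosh t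
    exact mul_nonneg (by linarith) (Real.exp_pos _).le
  · have hgint : IntegrableOn (fun t => exp (-t)) (Ioi (0:ℝ)) := by
      simpa using exp_neg_integrableOn_Ioi 0 one_pos
    have h1 : (∫ t in Ioi (0:ℝ), (cosh t - sinh t) * exp (-(x * cosh t)))
        ≤ ∫ t in Ioi (0:ℝ), exp (-t) := by
      apply setIntegral_mono_on (coshsub_int hx) hgint measurableSet_Ioi
      intro t ht
      rw [Real.cosh_sub_sinh]
      have he : exp (-(x * cosh t)) ≤ 1 := by
        apply Real.exp_le_one_iff.mpr
        have := Real.cosh_pos t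
        nlinarith
      nlinarith [Real.exp_pos (-t), Real.exp_pos (-(x * cosh t))]
    rw [integral_exp_neg_Ioi_zero] at h1
    exact h1

lemma Kb_split {x : ℝ} (hx : 0 < x) :
    Kb x = -(exp (-x) / x + ∫ t in Ioi (0:ℝ), (cosh t - sinh t) * exp (-(x * cosh t))) := by
  unfold Kb
  rw [integral_neg]
  congr 1
  have h : (fun t : ℝ => cosh t * exp (-(x * cosh t)))
      = fun t => sinh t * exp (-(x * cosh t)) + (cosh t - sinh t) * exp (-(x * cosh t)) := by
    funext t; ring
  rw [h, integral_add (isinh hx) (coshsub_int hx), int_sinh hx]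

lemma xKb_le {x : ℝ} (hx : 0 < x) :
    x * Kb x ≤ -(exp (-x)) ∧ -(exp (-x)) - x ≤ x * Kb x := by
  have hJ := J_bounds hx
  have hs := Kb_split hx
  have hx' : x ≠ 0 := hx.ne'
  rw [hs]
  have he : x * (exp (-x) / x) = exp (-x) := by field_simp
  constructor
  · nlinarith [hJ.1]
  · nlinarith [hJ.2]

lemma Ka_nonneg {x : ℝ} (hx : 0 < x) : 0 ≤ Ka x := by
  apply setIntegral_nonneg measurableSet_Ioi
  intro t _
  exact (Real.exp_pos _).le

lemma xKa_le {x : ℝ} (hx : 0 < x) : x * Ka x ≤ exp (-x) + x := by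
  have h1 : Ka x ≤ -(Kb x) := by
    unfold Ka Kb
    rw [integral_neg, neg_neg]
    apply setIntegral_mono_on (int0 hx) (int1 hx) measurableSet_Ioi
    intro t _
    nlinarith [Real.one_le_cosh t, Real.exp_pos (-(x * cosh t))]
  have h2 := (xKb_le hx).2
  nlinarith

lemma Ia_zero : Ia 0 = 1 := by
  unfold Ia
  rw [tsum_eq_single 0]
  · simp [cI]
  · intro k hk
    rw [zero_pow (by omega : 2*k ≠ 0), mul_zero]

lemma Ib_zero : Ib 0 = 0 := by
  unfold Ib
  have h : ∀ k : ℕ, cI k * (((2*k : ℕ):ℝ) * (0:ℝ)^(2*k-1)) = 0 := by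
    intro k
    cases k with
    | zero => simp
    | succ k => rw [zero_pow (by omega : 2*(k+1)-1 ≠ 0), mul_zero, mul_zero]
  rw [tsum_congr h, tsum_zero]

lemma cont_Ia : Continuous Ia := by
  have h : Differentiable ℝ Ia := fun x => (hasDerivAt_Ia x).differentiableAt
  exact h.continuous

lemma cont_Ib : Continuous Ib := by
  have h : Differentiable ℝ Ib := fun x => (hasDerivAt_Ib x).differentiableAt
  exact h.continuous

lemma tendsto_xKb : Tendsto (fun x => x * Kb x) (𝓝[>] (0:ℝ)) (𝓝 (-1)) := by
  apply tendsto_of_tendsto_of_tendsto_of_le_of_le'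
    (g := fun x => -(exp (-x)) - x) (h := fun x => -(exp (-x)))
  · have hc : Continuous (fun x : ℝ => -(exp (-x)) - x) := by fun_prop
    have := (hc.tendsto 0).mono_left (nhdsWithin_le_nhds (s := Ioi (0:ℝ)))
    simpa using this
  · have hc : Continuous (fun x : ℝ => -(exp (-x))) := by fun_prop
    have := (hc.tendsto 0).mono_left (nhdsWithin_le_nhds (s := Ioi (0:ℝ)))
    simpa using this
  · filter_upwards [self_mem_nhdsWithin] with y hy
    exact (xKb_le hy).2
  · filter_upwards [self_mem_nhdsWithin] with y hy
    exact (xKb_le hy).1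

lemma tendsto_IbxKa : Tendsto (fun x => Ib x * (x * Ka x)) (𝓝[>] (0:ℝ)) (𝓝 0) := by
  have hbnd : ∀ᶠ y in 𝓝[>] (0:ℝ), ‖Ib y * (y * Ka y)‖ ≤ |Ib y| * (exp (-y) + y) := by
    filter_upwards [self_mem_nhdsWithin] with y hy
    rw [Real.norm_eq_abs, abs_mul]
    apply mul_le_mul_of_nonneg_left _ (abs_nonneg _)
    rw [abs_of_nonneg (mul_nonneg (le_of_lt hy) (Ka_nonneg hy))]
    exact xKa_le hy
  have hg : Tendsto (fun x : ℝ => |Ib x| * (exp (-x) + x)) (𝓝[>] (0:ℝ)) (𝓝 0) := by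
    have hc : Continuous (fun x : ℝ => |Ib x| * (exp (-x) + x)) :=
      ((continuous_abs.comp cont_Ib).mul (by fun_prop))
    have := (hc.tendsto 0).mono_left (nhdsWithin_le_nhds (s := Ioi (0:ℝ)))
    simpa [Ib_zero] using this
  exact squeeze_zero_norm' hbnd hg

lemma tendsto_W : Tendsto W (𝓝[>] (0:ℝ)) (𝓝 (-1)) := by
  have h1 : Tendsto Ia (𝓝[>] (0:ℝ)) (𝓝 1) := by
    have := (cont_Ia.tendsto 0).mono_left (nhdsWithin_le_nhds (s := Ioi (0:ℝ)))
    simpa [Ia_zero] using this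
  have h := (h1.mul tendsto_xKb).sub tendsto_IbxKa
  have heq : ∀ x, Ia x * (x * Kb x) - Ib x * (x * Ka x) = W x := by
    intro x; unfold W; ring
  rw [show (1:ℝ) * (-1) - 0 = -1 by norm_num] at h
  exact h.congr heq

lemma W_eq {x : ℝ} (hx : 0 < x) : W x = -1 := by
  have hconst : Tendsto W (𝓝[>] (0:ℝ)) (𝓝 (W x)) := by
    have heq : (fun _ : ℝ => W x) =ᶠ[𝓝[>] (0:ℝ)] W := by
      filter_upwards [self_mem_nhdsWithin] with y hy
      exact W_const hx hy
    exact Filter.Tendsto.congr' heq tendsto_const_nhds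
  exact tendsto_nhds_unique hconst tendsto_W

lemma wronskian {x : ℝ} (hx : 0 < x) : Ia x * Kb x - Ib x * Ka x = -x⁻¹ := by
  have h := W_eq hx
  unfold W at h
  have hx' : x ≠ 0 := hx.ne'
  field_simp
  linear_combination h

lemma besselI_eq : besselI 0 = Ia := by
  funext x
  rw [besselI]
  exact besselI_zero_eq x

lemma besselK_eq : besselK 0 = Ka := by
  funext x
  unfold besselK Ka
  congr 1
  funext t
  rw [zero_mul, Real.cosh_zero, mul_one, neg_mul]

lemma wronskian_bessel {x : ℝ} (hx : 0 < x) :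
    besselI 0 x * deriv (besselK 0) x - deriv (besselI 0) x * besselK 0 x = -x⁻¹ := by
  have h1 : deriv (besselK 0) x = Kb x := by
    rw [besselK_eq]; exact (hasDerivAt_Ka hx).deriv
  have h2 : deriv (besselI 0) x = Ib x := by
    rw [besselI_eq]; exact (hasDerivAt_Ia x).deriv
  rw [h1, h2, besselI_eq, besselK_eq]
  exact wronskian hx

end WronskianProof

theorem cross_identity_D11 (x y z : ℝ) (hx : 0 < x) (hy : 0 < y) (hz : 0 < z) :
    D11 x y * D01 x z - D01 x y * D11 x z = -x⁻¹ * D11 z y := by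
  have hW := wronskian_bessel hx
  unfold D11 D01
  linear_combination (deriv (besselI 0) z * deriv (besselK 0) y
    - deriv (besselK 0) z * deriv (besselI 0) y) * hW
end

section
/- Let r_1, r_2 ∈ (0,1) and σ_1, σ_2 > 0, and suppose the 3×3 determinant D(r_1,σ_1,r_2,σ_2) with rows (D_{1,0}(r_1,r_2), √σ_1 I_1(r_1/√σ_1), D_{1,1}(r_1,r_2)), (I_0(r_2/√σ_2), 0, √σ_2 I_1(r_2/√σ_2)), (D(r_1,r_2), I_0(r_1/√σ_1), D_{0,1}(r_1,r_2)) vanishes. Then the two DN multipliers agree: (I_0(r_1/√σ_1) D_{1,1}(1,r_1) − √σ_1 I_1(r_1/√σ_1) D_{1,0}(1,r_1))·(I_0(r_2/√σ_2) D_{0,1}(1,r_2) − √σ_2 I_1(r_2/√σ_2) D(1,r_2)) = (I_0(r_2/√σ_2) D_{1,1}(1,r_2) − √σ_2 I_1(r_2/√σ_2) D_{1,0}(1,r_2))·(I_0(r_1/√σ_1) D_{0,1}(1,r_1) − √σ_1 I_1(r_1/√σ_1) D(1,r_1)). -/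
open Real

theorem nonuniqueness (r₁ r₂ : ℝ) (hr₁ : r₁ ∈ Set.Ioo (0 : ℝ) 1) (hr₂ : r₂ ∈ Set.Ioo (0 : ℝ) 1)
    (σ₁ σ₂ : ℝ) (h₁ : 0 < σ₁) (h₂ : 0 < σ₂)
    (hdet : Matrix.det
      !![D10 r₁ r₂, Real.sqrt σ₁ * besselI 1 (r₁ / Real.sqrt σ₁), D11 r₁ r₂;
         besselI 0 (r₂ / Real.sqrt σ₂), 0, Real.sqrt σ₂ * besselI 1 (r₂ / Real.sqrt σ₂);
         D r₁ r₂, besselI 0 (r₁ / Real.sqrt σ₁), D01 r₁ r₂] = 0) :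
    (besselI 0 (r₁ / Real.sqrt σ₁) * D11 1 r₁
        - Real.sqrt σ₁ * besselI 1 (r₁ / Real.sqrt σ₁) * D10 1 r₁) *
      (besselI 0 (r₂ / Real.sqrt σ₂) * D01 1 r₂
        - Real.sqrt σ₂ * besselI 1 (r₂ / Real.sqrt σ₂) * D 1 r₂)
    = (besselI 0 (r₂ / Real.sqrt σ₂) * D11 1 r₂
        - Real.sqrt σ₂ * besselI 1 (r₂ / Real.sqrt σ₂) * D10 1 r₂) *
      (besselI 0 (r₁ / Real.sqrt σ₁) * D01 1 r₁
        - Real.sqrt σ₁ * besselI 1 (r₁ / Real.sqrt σ₁) * D 1 r₁) := by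
  simp [Matrix.det_fin_three] at hdet
  unfold D D10 D01 D11 at hdet ⊢
  linear_combination (deriv (besselI 0) 1 * besselK 0 1
    - besselI 0 1 * deriv (besselK 0) 1) * hdet
end
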